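/- arXiv:1405.5044 — 8 statements merged into one kernel-verified Lean document; each statement's English description precedes it below -/
import Mathlib

section
/- For each integer k ≥ 1 define v_k(t) = (k^{k-1}/k!) · t^{k-1} · e^{-kt} for t ≥ 0. Then v_k(0) = 1 if k = 1 and v_k(0) = 0 if k ≥ 2, and for every t > 0 and every k ≥ 1 the derivative satisfies v_k'(t) = (k/2) · ∑_{l=1}^{k-1} v_l(t) v_{k-l}(t) − k · v_k(t). -/
/-!
Write `v_k(t) = a_k t^(k-1) e^(-kt)` with `a_k = k^(k-1)/k!`, the coefficients of the tree
function. Differentiating, the equation for `v_k` reduces to the convolution identity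
`k ∑_{l=1}^{k-1} a_l a_(k-l) = 2 (k-1) a_k`. Writing `k = l + (k-l)` and using the symmetry
`l ↔ k-l`, this becomes `∑_{l=1}^{k} a_l c_(k-l) = c_k` with `c_n = n^n/n!`, the case `y = 0` of
Abel's identity `∑_{j=0}^{m} a_(j+1) (y+m-j)^(m-j)/(m-j)! = (y+m+1)^m/m!`. The latter follows by
induction on `m`: both sides have derivative in `y` given by the case `m-1` at `y+1`, and they
agree at `y = -(m+1)`, where the left side is an `(m+1)`-st forward difference of a polynomial
of degree `m`.
-/

open Finset Real

theorem sum_neg_one_pow_mul_choose_mul_add_pow_eq_zero {R : Type*} [CommRing R] {d n : ℕ}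
    (h : d < n) (x : R) :
    ∑ k ∈ range (n + 1), (-1 : R) ^ (n - k) * n.choose k * (x + k) ^ d = 0 := by
  have := fwdDiff_iter_eq_sum_shift (1 : R) (fun r ↦ r ^ d) n x
  rw [fwdDiff_iter_pow_eq_zero_of_lt h] at this
  simpa [zsmul_eq_mul] using this.symm

noncomputable def treeFunCoeff (k : ℕ) : ℝ := (k : ℝ) ^ (k - 1) / (k.factorial : ℝ)

noncomputable def abelTerm (y : ℝ) (n : ℕ) : ℝ := (y + n) ^ n / (n.factorial : ℝ)

@[simp]
theorem abelTerm_zero_right (y : ℝ) : abelTerm y 0 = 1 := by simp [abelTerm]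

theorem hasDerivAt_abelTerm_succ (n : ℕ) (y : ℝ) :
    HasDerivAt (fun y ↦ abelTerm y (n + 1)) (abelTerm (y + 1) n) y := by
  have h := (((hasDerivAt_id' y).add_const ((n + 1 : ℕ) : ℝ)).fun_pow (n + 1)).div_const
    ((n + 1).factorial : ℝ)
  refine h.congr_deriv ?_
  simp only [abelTerm, Nat.factorial_succ, Nat.add_sub_cancel]
  push_cast
  field_simp
  ring

theorem treeFunCoeff_succ_mul_abelTerm_neg {j i : ℕ} :
    treeFunCoeff (j + 1) * abelTerm (-(j + i + 1 : ℕ)) i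
      = (-1) ^ i * (j + i + 1).choose (j + 1) * ((j + 1 : ℕ) : ℝ) ^ (j + i)
        / (j + i + 1).factorial := by
  have hbase : (-((j + i + 1 : ℕ) : ℝ) + i) = -((j + 1 : ℕ) : ℝ) := by push_cast; ring
  rw [treeFunCoeff, abelTerm, hbase, neg_pow, Nat.cast_choose ℝ (by omega : j + 1 ≤ j + i + 1),
    show j + i + 1 - (j + 1) = i by omega, Nat.add_sub_cancel, pow_add]
  field_simp

theorem sum_treeFunCoeff_mul_abelTerm_neg (m : ℕ) :
    ∑ j ∈ range (m + 2), treeFunCoeff (j + 1) * abelTerm (-(m + 2 : ℕ)) (m + 1 - j) = 0 := by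
  have hterm : ∀ j ∈ range (m + 2), treeFunCoeff (j + 1) * abelTerm (-(m + 2 : ℕ)) (m + 1 - j)
      = (-1 : ℝ) ^ (m + 2 - (j + 1)) * (m + 2).choose (j + 1) * (0 + ((j + 1 : ℕ) : ℝ)) ^ (m + 1)
        / (m + 2).factorial := by
    intro j hj
    obtain ⟨i, hi⟩ := Nat.exists_eq_add_of_le (Nat.lt_succ_iff.mp (mem_range.mp hj))
    rw [show m + 2 = j + i + 1 by omega, show m + 1 - j = i by omega,
      show j + i + 1 - (j + 1) = i by omega, hi, zero_add, treeFunCoeff_succ_mul_abelTerm_neg]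
  have hdiff := sum_neg_one_pow_mul_choose_mul_add_pow_eq_zero (R := ℝ)
    (show m + 1 < m + 2 by omega) 0
  rw [sum_range_succ'] at hdiff
  rw [sum_congr rfl hterm, ← sum_div, div_eq_zero_iff]
  left
  simpa using hdiff

theorem sum_treeFunCoeff_mul_abelTerm (m : ℕ) (y : ℝ) :
    ∑ j ∈ range (m + 1), treeFunCoeff (j + 1) * abelTerm y (m - j) = abelTerm (y + 1) m := by
  induction m generalizing y with
  | zero => simp [treeFunCoeff, abelTerm]
  | succ m ih =>
    have hsplit : ∀ y, ∑ j ∈ range (m + 2), treeFunCoeff (j + 1) * abelTerm y (m + 1 - j)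
        = ∑ j ∈ range (m + 1), treeFunCoeff (j + 1) * abelTerm y (m - j + 1)
          + treeFunCoeff (m + 2) := by
      intro y
      rw [sum_range_succ, Nat.sub_self, abelTerm_zero_right, mul_one]
      congr 1
      refine sum_congr rfl fun j hj ↦ ?_
      rw [Nat.sub_add_comm (Nat.lt_succ_iff.mp (mem_range.mp hj))]
    set F : ℝ → ℝ := fun y ↦
      ∑ j ∈ range (m + 2), treeFunCoeff (j + 1) * abelTerm y (m + 1 - j) - abelTerm (y + 1) (m + 1)
    have hF : ∀ y, HasDerivAt F 0 y := by
      intro y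
      have hlhs := (HasDerivAt.fun_sum fun j (_ : j ∈ range (m + 1)) ↦
        (hasDerivAt_abelTerm_succ (m - j) y).const_mul (treeFunCoeff (j + 1))).add_const
        (treeFunCoeff (m + 2))
      have hrhs := (hasDerivAt_abelTerm_succ m (y + 1)).comp_add_const y 1
      simp only [← hsplit, ih (y + 1)] at hlhs
      simpa only [sub_self] using hlhs.fun_sub hrhs
    have hzero : F (-(m + 2 : ℕ)) = 0 := by
      have hbase : -((m + 2 : ℕ) : ℝ) + 1 + ((m + 1 : ℕ) : ℝ) = 0 := by push_cast; ring
      simp only [F]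
      rw [sum_treeFunCoeff_mul_abelTerm_neg, abelTerm, hbase]
      simp
    have hconst := is_const_of_deriv_eq_zero (fun z ↦ (hF z).differentiableAt)
      (fun z ↦ (hF z).deriv) y (-(m + 2 : ℕ))
    exact sub_eq_zero.mp (hconst.trans hzero)

theorem abelTerm_zero_left {n : ℕ} (hn : n ≠ 0) : abelTerm 0 n = n * treeFunCoeff n := by
  obtain ⟨m, rfl⟩ := Nat.exists_eq_succ_of_ne_zero hn
  simp only [abelTerm, treeFunCoeff, zero_add, Nat.succ_sub_one, Nat.factorial_succ, pow_succ]
  push_cast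
  field_simp

theorem abelTerm_one_left (m : ℕ) : abelTerm 1 m = abelTerm 0 (m + 1) := by
  simp only [abelTerm, Nat.factorial_succ, pow_succ]
  push_cast
  field_simp
  ring

theorem sum_Ico_treeFunCoeff_mul_abelTerm_zero {k : ℕ} (hk : 1 ≤ k) :
    ∑ l ∈ Ico 1 k, treeFunCoeff l * abelTerm 0 (k - l) = (k - 1) * treeFunCoeff k := by
  obtain ⟨m, rfl⟩ := Nat.exists_eq_add_of_le' hk
  have habel := sum_treeFunCoeff_mul_abelTerm m 0
  rw [zero_add, abelTerm_one_left, abelTerm_zero_left m.succ_ne_zero] at habel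
  rw [sum_range_succ, Nat.sub_self, abelTerm_zero_right, mul_one] at habel
  rw [sum_Ico_eq_sum_range, Nat.add_sub_cancel]
  simp_rw [add_comm 1, Nat.add_sub_add_right]
  push_cast at habel ⊢
  linarith

theorem mul_sum_treeFunCoeff_mul_treeFunCoeff {k : ℕ} (hk : 1 ≤ k) :
    (k : ℝ) * ∑ l ∈ Ico 1 k, treeFunCoeff l * treeFunCoeff (k - l)
      = 2 * (k - 1) * treeFunCoeff k := by
  have hsplit : ∀ l ∈ Ico 1 k, (k : ℝ) * (treeFunCoeff l * treeFunCoeff (k - l))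
      = treeFunCoeff l * abelTerm 0 (k - l) + abelTerm 0 l * treeFunCoeff (k - l) := by
    intro l hl
    obtain ⟨hl1, hlk⟩ := mem_Ico.mp hl
    rw [abelTerm_zero_left (by omega), abelTerm_zero_left (by omega), Nat.cast_sub hlk.le]
    ring
  have hreflect : ∑ l ∈ Ico 1 k, abelTerm 0 l * treeFunCoeff (k - l)
      = ∑ l ∈ Ico 1 k, treeFunCoeff l * abelTerm 0 (k - l) := by
    have h := sum_Ico_reflect (fun l ↦ treeFunCoeff l * abelTerm 0 (k - l)) 1 (Nat.le_succ k)
    rw [Nat.add_sub_cancel_left, Nat.add_sub_cancel] at h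
    rw [← h]
    refine sum_congr rfl fun l hl ↦ ?_
    rw [Nat.sub_sub_self (mem_Ico.mp hl).2.le, mul_comm]
  rw [mul_sum, sum_congr rfl hsplit, sum_add_distrib, hreflect,
    sum_Ico_treeFunCoeff_mul_abelTerm_zero hk]
  ring

noncomputable def smoluchowskiSol (k : ℕ) (t : ℝ) : ℝ :=
  treeFunCoeff k * t ^ (k - 1) * exp (-k * t)

theorem smoluchowskiSol_mul_smoluchowskiSol_sub {k l : ℕ} (hl : 1 ≤ l) (hlk : l < k) (t : ℝ) :
    smoluchowskiSol l t * smoluchowskiSol (k - l) t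
      = treeFunCoeff l * treeFunCoeff (k - l) * (t ^ (k - 2) * exp (-k * t)) := by
  have hpow : t ^ (l - 1) * t ^ (k - l - 1) = t ^ (k - 2) := by
    rw [← pow_add]
    congr 1
    omega
  have hexp : exp (-l * t) * exp (-(k - l : ℕ) * t) = exp (-k * t) := by
    rw [← exp_add, Nat.cast_sub hlk.le]
    ring_nf
  rw [smoluchowskiSol, smoluchowskiSol, ← hpow, ← hexp]
  ring

theorem hasDerivAt_smoluchowskiSol {k : ℕ} (hk : 1 ≤ k) (t : ℝ) :
    HasDerivAt (smoluchowskiSol k)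
      (k / 2 * ∑ l ∈ Ico 1 k, smoluchowskiSol l t * smoluchowskiSol (k - l) t
        - k * smoluchowskiSol k t) t := by
  have hderiv := (((hasDerivAt_pow (k - 1) t).const_mul (treeFunCoeff k)).mul
    ((hasDerivAt_id t).const_mul (-k : ℝ)).exp)
  have hcoag : ∑ l ∈ Ico 1 k, smoluchowskiSol l t * smoluchowskiSol (k - l) t
      = (∑ l ∈ Ico 1 k, treeFunCoeff l * treeFunCoeff (k - l)) * (t ^ (k - 2) * exp (-k * t)) := by
    rw [sum_mul]
    refine sum_congr rfl fun l hl ↦ ?_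
    exact smoluchowskiSol_mul_smoluchowskiSol_sub (mem_Ico.mp hl).1 (mem_Ico.mp hl).2 t
  refine hderiv.congr_deriv ?_
  rw [hcoag, smoluchowskiSol, Nat.sub_sub, Nat.cast_sub hk]
  simp only [id, mul_one, Nat.cast_one]
  linear_combination (-(t ^ (k - 2) * exp (-k * t)) / 2) * mul_sum_treeFunCoeff_mul_treeFunCoeff hk

theorem stmt0 (v : ℕ → ℝ → ℝ)
    (hv : ∀ k : ℕ, 1 ≤ k → ∀ t : ℝ, 0 ≤ t →
      v k t = (k : ℝ) ^ (k - 1) / (Nat.factorial k : ℝ) * t ^ (k - 1) * Real.exp (-(k : ℝ) * t)) :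
    (v 1 0 = 1 ∧ ∀ k : ℕ, 2 ≤ k → v k 0 = 0) ∧
    (∀ t : ℝ, 0 < t → ∀ k : ℕ, 1 ≤ k →
      HasDerivAt (v k)
        ((k : ℝ) / 2 * ∑ l ∈ Finset.Ico 1 k, v l t * v (k - l) t - (k : ℝ) * v k t) t) := by
  have hsol : ∀ k, 1 ≤ k → ∀ t, 0 ≤ t → v k t = smoluchowskiSol k t := hv
  refine ⟨⟨?_, fun k hk ↦ ?_⟩, fun t ht k hk ↦ ?_⟩
  · simp [hsol 1 le_rfl 0 le_rfl, smoluchowskiSol, treeFunCoeff]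
  · simp [hsol k (by omega) 0 le_rfl, smoluchowskiSol, zero_pow (show k - 1 ≠ 0 by omega)]
  · have hcoag : ∑ l ∈ Ico 1 k, v l t * v (k - l) t
        = ∑ l ∈ Ico 1 k, smoluchowskiSol l t * smoluchowskiSol (k - l) t :=
      sum_congr rfl fun l hl ↦ by
        rw [hsol l (mem_Ico.mp hl).1 t ht.le,
          hsol (k - l) (Nat.sub_pos_of_lt (mem_Ico.mp hl).2) t ht.le]
    rw [hcoag, hsol k hk t ht.le]
    refine (hasDerivAt_smoluchowskiSol hk t).congr_of_eventuallyEq ?_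
    filter_upwards [Ioi_mem_nhds ht] with s hs using hsol k hk s (le_of_lt hs)
end

section
/- Let T > 0 and let S : [0,T] × [0,1) → ℝ have continuous partial derivatives ∂_t S and ∂_z S and satisfy the PDE ∂_t S(t,z) = z · ∂_z S(t,z) · (S(t,z) − 1) on [0,T] × (0,1). Fix w ∈ (0,1) and define ψ_w(t) = w · e^{t(1 − S(0,w))}. Then for every t ∈ [0,T] such that ψ_w(s) < 1 for all s ∈ [0,t], one has S(t, ψ_w(t)) = S(0, w), and consequently ψ_w satisfies the characteristic equation (d/dt) ψ_w(t) = ψ_w(t) · (1 − S(t, ψ_w(t))). -/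
/-!
Write `g s = S(s, ψ s) - S(0, w)`. Since `ψ' = ψ · (1 - S(0, w))`, the chain rule and the PDE give
`g' = St + Sz · ψ' = ψ · Sz · (S - 1 + 1 - S(0, w)) = (ψ · Sz) · g`: a linear ODE with continuous
coefficient and `g 0 = 0`, so `g ≡ 0` by Grönwall's inequality. As `S` is only assumed to have
continuous partial derivatives, the chain rule along `ψ` is proved from the mean value theorem in
`z` together with the continuity of `∂_z S`.
-/

open Set Filter Topology

theorem eq_zero_of_hasDerivWithinAt_smul_self {E : Type*} [NormedAddCommGroup E]
    [NormedSpace ℝ E] {f : ℝ → E} {k : ℝ → ℝ} {a b : ℝ} (hk : ContinuousOn k (Icc a b))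
    (hf : ∀ x ∈ Icc a b, HasDerivWithinAt f (k x • f x) (Icc a b) x) (ha : f a = 0) :
    ∀ x ∈ Icc a b, f x = 0 := by
  obtain ⟨K, hK⟩ := isCompact_Icc.exists_bound_of_continuousOn hk
  refine eq_zero_of_abs_deriv_le_mul_abs_self_of_eq_zero_right (K := K)
    (fun x hx => (hf x hx).continuousWithinAt)
    (fun x hx => (hf x (Ico_subset_Icc_self hx)).mono_of_mem_nhdsWithin
      (Icc_mem_nhdsGE_of_mem hx)) ha fun x hx => ?_
  rw [norm_smul]
  exact mul_le_mul_of_nonneg_right (hK x (Ico_subset_Icc_self hx)) (norm_nonneg _)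

theorem exists_mem_uIcc_sub_eq_mul {f f' : ℝ → ℝ} {a b : ℝ}
    (hf : ∀ z ∈ uIcc a b, HasDerivWithinAt f (f' z) (uIcc a b) z) :
    ∃ ξ ∈ uIcc a b, f b - f a = f' ξ * (b - a) := by
  wlog hab : a < b generalizing a b
  · rcases (not_lt.mp hab).eq_or_lt with hba | hba
    · exact ⟨a, left_mem_uIcc, by rw [hba]; ring⟩
    · obtain ⟨ξ, hξ, h⟩ := this (uIcc_comm a b ▸ hf) hba
      exact ⟨ξ, uIcc_comm a b ▸ hξ, by linear_combination -h⟩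
  rw [uIcc_of_le hab.le] at hf ⊢
  obtain ⟨ξ, hξ, h⟩ := exists_hasDerivAt_eq_slope f f' hab
    (fun z hz => (hf z hz).continuousWithinAt)
    (fun z hz => (hf z (Ioo_subset_Icc_self hz)).hasDerivAt (Icc_mem_nhds hz.1 hz.2))
  exact ⟨ξ, Ioo_subset_Icc_self hξ, by rw [h, div_mul_cancel₀ _ (sub_ne_zero.mpr hab.ne')]⟩

theorem hasDerivWithinAt_comp_curve_of_partial {S Sz : ℝ → ℝ → ℝ} {γ : ℝ → ℝ} {s J : Set ℝ}
    {x St γ' : ℝ} (hJ : J.OrdConnected) (hx : x ∈ s) (hγJ : MapsTo γ s J)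
    (hγ : HasDerivWithinAt γ γ' s x) (hSt : HasDerivWithinAt (fun y => S y (γ x)) St s x)
    (hSz : ∀ y ∈ s, ∀ z ∈ J, HasDerivWithinAt (S y) (Sz y z) J z)
    (hSzc : ContinuousWithinAt (fun p : ℝ × ℝ => Sz p.1 p.2) (s ×ˢ J) (x, γ x)) :
    HasDerivWithinAt (fun y => S y (γ y)) (St + Sz x (γ x) * γ') s x := by
  have huIcc : ∀ y ∈ s, uIcc (γ x) (γ y) ⊆ J := fun y hy => hJ.uIcc_subset (hγJ hx) (hγJ hy)
  have hmvt : ∀ y ∈ s, ∃ ξ ∈ uIcc (γ x) (γ y), S y (γ y) - S y (γ x) = Sz y ξ * (γ y - γ x) :=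
    fun y hy => exists_mem_uIcc_sub_eq_mul fun z hz =>
      (hSz y hy z (huIcc y hy hz)).mono (huIcc y hy)
  choose! ξ hξ hSξ using hmvt
  have hsL : ∀ᶠ y in 𝓝[s \ {x}] x, y ∈ s \ {x} := self_mem_nhdsWithin
  have hγ_tendsto : Tendsto (fun y => γ y - γ x) (𝓝[s \ {x}] x) (𝓝 0) := by
    simpa using (hγ.continuousWithinAt.mono sdiff_subset).tendsto.sub_const (γ x)
  have hξ_tendsto : Tendsto ξ (𝓝[s \ {x}] x) (𝓝 (γ x)) := by
    refine tendsto_sub_nhds_zero_iff.mp (squeeze_zero_norm' ?_ (by simpa using hγ_tendsto.abs))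
    filter_upwards [hsL] with y hy
    exact abs_sub_left_of_mem_uIcc (hξ y hy.1)
  have hSzξ : Tendsto (fun y => Sz y (ξ y)) (𝓝[s \ {x}] x) (𝓝 (Sz x (γ x))) := by
    have hpair : Tendsto (fun y => (y, ξ y)) (𝓝[s \ {x}] x) (𝓝[s ×ˢ J] (x, γ x)) := by
      refine tendsto_nhdsWithin_iff.mpr ⟨?_, ?_⟩
      · exact (tendsto_id.mono_left nhdsWithin_le_nhds).prodMk_nhds hξ_tendsto
      · filter_upwards [hsL] with y hy
        exact ⟨hy.1, huIcc y hy.1 (hξ y hy.1)⟩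
    exact hSzc.tendsto.comp hpair
  rw [hasDerivWithinAt_iff_tendsto_slope] at hγ hSt ⊢
  refine (hSt.add (hSzξ.mul hγ)).congr' ?_
  filter_upwards [hsL] with y hy
  have hyx : y - x ≠ 0 := sub_ne_zero.mpr hy.2
  simp only [slope_def_field]
  field_simp
  linear_combination -hSξ y hy.1

theorem stmt7_general (T : ℝ) (S St Sz : ℝ → ℝ → ℝ)
    (hSt : ∀ t ∈ Set.Icc (0 : ℝ) T, ∀ z ∈ Set.Ico (0 : ℝ) 1,
      HasDerivWithinAt (fun s => S s z) (St t z) (Set.Icc 0 T) t)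
    (hSz : ∀ t ∈ Set.Icc (0 : ℝ) T, ∀ z ∈ Set.Ico (0 : ℝ) 1,
      HasDerivWithinAt (fun w => S t w) (Sz t z) (Set.Ico 0 1) z)
    (hSzc : ContinuousOn (fun p : ℝ × ℝ => Sz p.1 p.2) (Set.Icc 0 T ×ˢ Set.Ico 0 1))
    (hPDE : ∀ t ∈ Set.Icc (0 : ℝ) T, ∀ z ∈ Set.Ioo (0 : ℝ) 1,
      St t z = z * Sz t z * (S t z - 1))
    (w : ℝ) (hw : w ∈ Set.Ioo (0 : ℝ) 1)
    (ψ : ℝ → ℝ) (hψ : ∀ t : ℝ, ψ t = w * Real.exp (t * (1 - S 0 w))) :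
    ∀ t ∈ Set.Icc (0 : ℝ) T, (∀ s ∈ Set.Icc (0 : ℝ) t, ψ s < 1) →
      S t (ψ t) = S 0 w ∧
      HasDerivWithinAt ψ (ψ t * (1 - S t (ψ t))) (Set.Icc 0 T) t := by
  intro t ht hψ_lt
  set c := 1 - S 0 w
  have hψ_deriv : ∀ s, HasDerivAt ψ (ψ s * c) s := by
    intro s
    rw [hψ s, funext hψ]
    simpa [mul_assoc] using ((hasDerivAt_id s).mul_const c).exp.const_mul w
  have hψ_mem : MapsTo ψ (Icc 0 t) (Ioo 0 1) := fun s hs =>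
    ⟨by rw [hψ]; exact mul_pos hw.1 (Real.exp_pos _), hψ_lt s hs⟩
  have htT : Icc 0 t ⊆ Icc 0 T := Icc_subset_Icc_right ht.2
  have hSzc' : ContinuousOn (fun p : ℝ × ℝ => Sz p.1 p.2) (Icc 0 t ×ˢ Ico 0 1) :=
    hSzc.mono (prod_mono htT subset_rfl)
  have hg : ∀ s ∈ Icc 0 t, HasDerivWithinAt (fun s => S s (ψ s) - S 0 w)
      ((ψ s * Sz s (ψ s)) • (S s (ψ s) - S 0 w)) (Icc 0 t) s := by
    intro s hs
    have hψs := Ioo_subset_Ico_self (hψ_mem hs)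
    refine ((hasDerivWithinAt_comp_curve_of_partial ordConnected_Ico hs
      (hψ_mem.mono_right Ioo_subset_Ico_self) (hψ_deriv s).hasDerivWithinAt
      ((hSt s (htT hs) (ψ s) hψs).mono htT) (fun y hy z hz => hSz y (htT hy) z hz)
      (hSzc' _ ⟨hs, hψs⟩)).sub_const (S 0 w)).congr_deriv ?_
    rw [hPDE s (htT hs) (ψ s) (hψ_mem hs), smul_eq_mul]
    ring
  have hψ_cont : ContinuousOn ψ (Icc 0 t) := fun s _ =>
    (hψ_deriv s).continuousAt.continuousWithinAt
  have hk : ContinuousOn (fun s => ψ s * Sz s (ψ s)) (Icc 0 t) :=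
    hψ_cont.mul <| hSzc'.comp (continuousOn_id.prodMk hψ_cont)
      fun s hs => ⟨hs, Ioo_subset_Ico_self (hψ_mem hs)⟩
  have hS_eq : S t (ψ t) = S 0 w := sub_eq_zero.mp <|
    eq_zero_of_hasDerivWithinAt_smul_self hk hg (by simp [hψ]) t (right_mem_Icc.mpr ht.1)
  refine ⟨hS_eq, ?_⟩
  rw [hS_eq]
  exact (hψ_deriv t).hasDerivWithinAt

theorem stmt7 (T : ℝ) (hT : 0 < T) (S St Sz : ℝ → ℝ → ℝ)
    (hSt : ∀ t ∈ Set.Icc (0 : ℝ) T, ∀ z ∈ Set.Ico (0 : ℝ) 1,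
      HasDerivWithinAt (fun s => S s z) (St t z) (Set.Icc 0 T) t)
    (hSz : ∀ t ∈ Set.Icc (0 : ℝ) T, ∀ z ∈ Set.Ico (0 : ℝ) 1,
      HasDerivWithinAt (fun w => S t w) (Sz t z) (Set.Ico 0 1) z)
    (hStc : ContinuousOn (fun p : ℝ × ℝ => St p.1 p.2) (Set.Icc 0 T ×ˢ Set.Ico 0 1))
    (hSzc : ContinuousOn (fun p : ℝ × ℝ => Sz p.1 p.2) (Set.Icc 0 T ×ˢ Set.Ico 0 1))
    (hPDE : ∀ t ∈ Set.Icc (0 : ℝ) T, ∀ z ∈ Set.Ioo (0 : ℝ) 1,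
      St t z = z * Sz t z * (S t z - 1))
    (w : ℝ) (hw : w ∈ Set.Ioo (0 : ℝ) 1)
    (ψ : ℝ → ℝ) (hψ : ∀ t : ℝ, ψ t = w * Real.exp (t * (1 - S 0 w))) :
    ∀ t ∈ Set.Icc (0 : ℝ) T, (∀ s ∈ Set.Icc (0 : ℝ) t, ψ s < 1) →
      S t (ψ t) = S 0 w ∧
      HasDerivWithinAt ψ (ψ t * (1 - S t (ψ t))) (Set.Icc 0 T) t :=
  stmt7_general T S St Sz hSt hSz hSzc hPDE w hw ψ hψ
end

section
/- Let T > 0 and let v_k : [0,T) → [0,∞), for integers k ≥ 1, be differentiable functions satisfying the Smoluchowski coagulation equations v_k'(t) = −k v_k(t) + (k/2) ∑_{l=1}^{k-1} v_l(t) v_{k-l}(t) for all k ≥ 1 and t ∈ [0,T), such that ∑_{k ≥ 1} v_k(t) = 1 for all t ∈ [0,T), the mean E(t) = ∑_{k ≥ 1} k · v_k(t) is finite for all t ∈ [0,T), and E(0) = 1/T. Then E(t) = 1/(T − t) for all t ∈ [0,T). -/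
/-!
Truncate at size `N`: the moments `E_N = ∑_{k ≤ N} k v_k` and `M_N = ∑_{k ≤ N} v_k` are
differentiable, and symmetrising the gain term over pairs `(l, m)` gives
`E_N' ≤ E_N²` and `E_N' ≥ E_{⌊N/2⌋}² + N M_N'`. The first inequality and comparison with the
Riccati solution give `E(t) ≤ 1 / (T - t)`. With this bound, dominated convergence and Markov's
inequality `N (1 - M_N) ≤ E - E_N` turn both inequalities into `E(t) = E(0) + ∫₀ᵗ E²`. So `E` is
`C¹` with `E' = E²` and `E > 0`, and `(1 / E)' = -1` gives `1 / E(t) = T - t`.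
-/

open Filter Topology MeasureTheory intervalIntegral
open scoped Interval

section

open Set

theorem uIcc_subset_Ico_of_mem {a b t : ℝ} (ht : t ∈ Ico a b) : uIcc a t ⊆ Ico a b := by
  rw [uIcc_of_le ht.1]
  exact Icc_subset_Ico_right ht.2

theorem le_inv_sub_of_hasDerivWithinAt_le_sq {f f' : ℝ → ℝ} {T : ℝ}
    (hf : ∀ x ∈ Ico 0 T, HasDerivWithinAt f (f' x) (Ico 0 T) x)
    (hf' : ∀ x ∈ Ico 0 T, f' x ≤ f x ^ 2) (h0 : f 0 ≤ T⁻¹) {t : ℝ} (ht : t ∈ Ico 0 T) :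
    f t ≤ (T - t)⁻¹ := by
  obtain ⟨ht0, htT⟩ := ht
  have hT : 0 < T := ht0.trans_lt htT
  -- `c / (c * T - x)` solves `B' = B² / c`, a strict supersolution of `B' = B²` for `c < 1`.
  have hbarrier : ∀ c ∈ Ioo (t / T) 1, f t ≤ c / (c * T - t) := by
    rintro c ⟨hc, hc1⟩
    have hcT : t < c * T := (div_lt_iff₀ hT).1 hc
    have hc0 : 0 < c := (div_nonneg ht0 hT.le).trans_lt hc
    have hB : ∀ x ≤ t, HasDerivAt (fun y => c / (c * T - y)) (c / (c * T - x) ^ 2) x := by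
      intro x hx
      have hne : c * T - x ≠ 0 := by linarith
      simpa using (hasDerivAt_const x c).fun_div ((hasDerivAt_id' x).const_sub (c * T)) hne
    refine image_le_of_deriv_right_lt_deriv_boundary' (f' := f')
      (B' := fun x => c / (c * T - x) ^ 2)
      (fun x hx => (hf x ⟨hx.1, hx.2.trans_lt htT⟩).continuousWithinAt.mono
        (Icc_subset_Ico_right htT))
      (fun x hx => (hf x ⟨hx.1, hx.2.trans htT⟩).mono_of_mem_nhdsWithin
        (mem_of_superset (Ico_mem_nhdsGE (hx.2.trans htT)) (Ico_subset_Ico_left hx.1)))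
      ?_ (fun x hx => (hB x hx.2).continuousAt.continuousWithinAt)
      (fun x hx => (hB x hx.2.le).hasDerivWithinAt) ?_ ⟨ht0, le_rfl⟩
    · rwa [sub_zero, div_mul_cancel_left₀ hc0.ne']
    · intro x hx hfx
      have hpos : 0 < c * T - x := by linarith [hx.2]
      calc f' x ≤ f x ^ 2 := hf' x ⟨hx.1, hx.2.trans htT⟩
        _ = c ^ 2 / (c * T - x) ^ 2 := by rw [hfx, div_pow]
        _ < c / (c * T - x) ^ 2 := by gcongr; nlinarith
  have hlim : Tendsto (fun c => c / (c * T - t)) (𝓝[<] 1) (𝓝 (T - t)⁻¹) := by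
    have hcont : ContinuousAt (fun c => c / (c * T - t)) 1 :=
      continuousAt_id.div ((continuousAt_id.mul continuousAt_const).sub continuousAt_const)
        (by simp; linarith)
    simpa using hcont.tendsto.mono_left nhdsWithin_le_nhds
  exact ge_of_tendsto hlim (eventually_of_mem (Ioo_mem_nhdsLT ((div_lt_one hT).2 htT)) hbarrier)

theorem eq_inv_sub_of_eq_add_integral_sq {E : ℝ → ℝ} {T : ℝ}
    (hint : ∀ t ∈ Ico 0 T, IntervalIntegrable (fun u => E u ^ 2) volume 0 t)
    (hE : ∀ t ∈ Ico 0 T, E t = E 0 + ∫ u in 0..t, E u ^ 2) (hE0 : E 0 = T⁻¹)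
    {t : ℝ} (ht : t ∈ Ico 0 T) : E t = (T - t)⁻¹ := by
  obtain ⟨ht0, htT⟩ := ht
  have hT : 0 < T := ht0.trans_lt htT
  have hsub : Icc 0 t ⊆ Ico 0 T := Icc_subset_Ico_right htT
  have hpos : ∀ u ∈ Icc 0 t, 0 < E u := fun u hu => by
    rw [hE u (hsub hu), hE0]
    exact add_pos_of_pos_of_nonneg (inv_pos.2 hT)
      (integral_nonneg hu.1 fun _ _ => sq_nonneg _)
  have hcont : ContinuousOn E (Icc 0 t) := by
    have h := continuousOn_primitive_interval' (hint t ⟨ht0, htT⟩) left_mem_uIcc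
    rw [uIcc_of_le ht0] at h
    exact (continuousOn_const.add h).congr fun u hu => hE u (hsub hu)
  have hderiv : ∀ u ∈ Ioo 0 t, HasDerivAt E (E u ^ 2) u := by
    intro u hu
    have hsq : ContinuousOn (fun u => E u ^ 2) (Ioo 0 t) := (hcont.mono Ioo_subset_Icc_self).pow 2
    have hprim := integral_hasDerivAt_right (hint u (hsub (Ioo_subset_Icc_self hu)))
      (hsq.stronglyMeasurableAtFilter isOpen_Ioo u hu) (hsq.continuousAt (isOpen_Ioo.mem_nhds hu))
    refine (hprim.const_add (E 0)).congr_of_eventuallyEq ?_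
    filter_upwards [isOpen_Ioo.mem_nhds hu] with s hs
    exact hE s (hsub (Ioo_subset_Icc_self hs))
  -- `(1 / E)' = -E' / E² = -1`
  have hrecip : ∫ _ in 0..t, (-1 : ℝ) = (E t)⁻¹ - (E 0)⁻¹ := by
    refine integral_eq_sub_of_hasDerivAt_of_le ht0 (hcont.inv₀ fun u hu => (hpos u hu).ne')
      (fun u hu => ?_) intervalIntegrable_const
    have hne := (hpos u (Ioo_subset_Icc_self hu)).ne'
    simpa [neg_div, div_self (pow_ne_zero 2 hne)] using (hderiv u hu).inv hne
  rw [intervalIntegral.integral_const, hE0, inv_inv] at hrecip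
  rw [← inv_inv (E t)]
  congr 1
  simp at hrecip
  linarith

end

namespace Smoluchowski

section Algebra

open Finset

noncomputable def coagRate (a : ℕ → ℝ) (k : ℕ) : ℝ :=
  -(k : ℝ) * a k + (k : ℝ) / 2 * ∑ l ∈ Ico 1 k, a l * a (k - l)

noncomputable def truncMass (a : ℕ → ℝ) (N : ℕ) : ℝ := ∑ k ∈ Icc 1 N, a k

noncomputable def truncMean (a : ℕ → ℝ) (N : ℕ) : ℝ := ∑ k ∈ Icc 1 N, (k : ℝ) * a k

noncomputable def mean (a : ℕ → ℝ) : ℝ := ∑' k : ℕ, ((k : ℝ) + 1) * a (k + 1)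

noncomputable def triangleSum (N : ℕ) (F : ℕ → ℕ → ℝ) : ℝ :=
  ∑ l ∈ Icc 1 N, ∑ m ∈ Icc 1 (N - l), F l m

theorem sum_Icc_sum_Ico_eq_triangleSum (N : ℕ) (F : ℕ → ℕ → ℝ) :
    ∑ k ∈ Icc 1 N, ∑ l ∈ Ico 1 k, F l (k - l) = triangleSum N F := by
  rw [sum_comm' (t' := Icc 1 N) (s' := fun l => Ioc l N)
    fun k l => by simp only [mem_Icc, mem_Ico, mem_Ioc]; omega]
  refine sum_congr rfl fun l hl => ?_
  have hIoc : Ioc l N = (Icc 1 (N - l)).map (addLeftEmbedding l) := by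
    ext m
    simp only [mem_Ioc, Finset.mem_map, mem_Icc, addLeftEmbedding_apply]
    constructor
    · intro hm; exact ⟨m - l, by omega, by omega⟩
    · rintro ⟨i, hi, rfl⟩; omega
  simp only [hIoc, sum_map, addLeftEmbedding_apply, Nat.add_sub_cancel_left]

theorem triangleSum_comm (N : ℕ) (F : ℕ → ℕ → ℝ) :
    triangleSum N F = triangleSum N (fun l m => F m l) :=
  sum_comm' fun l m => by simp only [mem_Icc]; omega

theorem triangleSum_add_mul_symm (N : ℕ) (X : ℕ → ℕ → ℝ) (hX : ∀ l m, X l m = X m l) :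
    triangleSum N (fun l m => ((l : ℝ) + m) / 2 * X l m) =
      triangleSum N (fun l m => (l : ℝ) * X l m) := by
  have hswap : triangleSum N (fun l m => (m : ℝ) * X l m) =
      triangleSum N (fun l m => (l : ℝ) * X l m) := by
    rw [triangleSum_comm]
    congr 1
    funext l m
    rw [hX]
  have hsplit : triangleSum N (fun l m => ((l : ℝ) + m) / 2 * X l m) =
      (triangleSum N (fun l m => (l : ℝ) * X l m) +
        triangleSum N (fun l m => (m : ℝ) * X l m)) / 2 := by
    simp only [triangleSum, ← sum_add_distrib, sum_div]
    exact sum_congr rfl fun _ _ => sum_congr rfl fun _ _ => by ring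
  rw [hsplit, hswap]
  ring

theorem sum_sub_mul_coagRate (a : ℕ → ℝ) (N : ℕ) (c : ℝ) :
    ∑ k ∈ Icc 1 N, ((k : ℝ) - c) * coagRate a k =
      triangleSum N (fun l m => (l : ℝ) * m * (a l * a m)) +
        ∑ l ∈ Icc 1 N, (c - l) * l * a l * (1 - truncMass a (N - l)) := by
  have hgain : ∑ k ∈ Icc 1 N, ((k : ℝ) - c) * ((k : ℝ) / 2 * ∑ l ∈ Ico 1 k, a l * a (k - l)) =
      triangleSum N (fun l m => ((l : ℝ) + m) / 2 * (((l : ℝ) + m - c) * (a l * a m))) := by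
    rw [← sum_Icc_sum_Ico_eq_triangleSum]
    refine sum_congr rfl fun k _ => ?_
    rw [mul_sum, mul_sum]
    refine sum_congr rfl fun l hl => ?_
    rw [Nat.cast_sub (mem_Ico.1 hl).2.le]
    ring
  calc ∑ k ∈ Icc 1 N, ((k : ℝ) - c) * coagRate a k
      = ∑ k ∈ Icc 1 N, ((k : ℝ) - c) * ((k : ℝ) / 2 * ∑ l ∈ Ico 1 k, a l * a (k - l)) -
          ∑ l ∈ Icc 1 N, ((l : ℝ) - c) * l * a l := by
        rw [← sum_sub_distrib]
        exact sum_congr rfl fun k _ => by unfold coagRate; ring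
    _ = triangleSum N (fun l m => (l : ℝ) * m * (a l * a m)) +
          ∑ l ∈ Icc 1 N, ((l : ℝ) - c) * l * a l * truncMass a (N - l) -
          ∑ l ∈ Icc 1 N, ((l : ℝ) - c) * l * a l := by
        rw [hgain, triangleSum_add_mul_symm N _ fun l m => by ring]
        simp only [triangleSum, truncMass, mul_sum, ← sum_add_distrib]
        exact congrArg (· - _) (sum_congr rfl fun _ _ => sum_congr rfl fun _ _ => by ring)
    _ = _ := by
        rw [add_sub_assoc, ← sum_sub_distrib]
        exact congrArg _ (sum_congr rfl fun _ _ => by ring)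

theorem sum_Icc_one_eq_sum_range (f : ℕ → ℝ) (N : ℕ) :
    ∑ k ∈ Icc 1 N, f k = ∑ i ∈ range N, f (i + 1) := by
  rw [← Ico_add_one_right_eq_Icc, sum_Ico_eq_sum_range]
  simp only [add_tsub_cancel_right, add_comm 1]

theorem truncMean_sq (a : ℕ → ℝ) (N : ℕ) :
    truncMean a N ^ 2 = ∑ l ∈ Icc 1 N, ∑ m ∈ Icc 1 N, (l : ℝ) * m * (a l * a m) := by
  rw [truncMean, sq, sum_mul_sum]
  exact sum_congr rfl fun _ _ => sum_congr rfl fun _ _ => by ring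

theorem truncMean_eq_sum_range (a : ℕ → ℝ) (N : ℕ) :
    truncMean a N = ∑ i ∈ range N, ((i : ℝ) + 1) * a (i + 1) := by
  rw [truncMean, sum_Icc_one_eq_sum_range]
  push_cast
  rfl

section Bounds

variable {a : ℕ → ℝ}

theorem triangleSum_le_truncMean_sq (ha : ∀ k, 1 ≤ k → 0 ≤ a k) (N : ℕ) :
    triangleSum N (fun l m => (l : ℝ) * m * (a l * a m)) ≤ truncMean a N ^ 2 := by
  rw [truncMean_sq]
  refine sum_le_sum fun l hl => sum_le_sum_of_subset_of_nonneg
    (Icc_subset_Icc_right (N.sub_le l)) fun m hm _ => ?_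
  have := ha l (mem_Icc.1 hl).1
  have := ha m (mem_Icc.1 hm).1
  positivity

theorem truncMean_sq_le_triangleSum (ha : ∀ k, 1 ≤ k → 0 ≤ a k) {M N : ℕ} (hMN : 2 * M ≤ N) :
    truncMean a M ^ 2 ≤ triangleSum N (fun l m => (l : ℝ) * m * (a l * a m)) := by
  have hF : ∀ l m : ℕ, 1 ≤ l → 1 ≤ m → 0 ≤ (l : ℝ) * m * (a l * a m) := fun l m hl hm => by
    have := ha l hl
    have := ha m hm
    positivity
  rw [truncMean_sq]
  calc ∑ l ∈ Icc 1 M, ∑ m ∈ Icc 1 M, (l : ℝ) * m * (a l * a m)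
      ≤ ∑ l ∈ Icc 1 M, ∑ m ∈ Icc 1 (N - l), (l : ℝ) * m * (a l * a m) :=
        sum_le_sum fun l hl => sum_le_sum_of_subset_of_nonneg
          (Icc_subset_Icc_right (by simp only [mem_Icc] at hl; omega))
          fun m hm _ => hF l m (mem_Icc.1 hl).1 (mem_Icc.1 hm).1
    _ ≤ _ :=
        sum_le_sum_of_subset_of_nonneg (Icc_subset_Icc_right (by omega)) fun l hl _ =>
          sum_nonneg fun m hm => hF l m (mem_Icc.1 hl).1 (mem_Icc.1 hm).1

theorem sum_mul_coagRate_le_truncMean_sq (ha : ∀ k, 1 ≤ k → 0 ≤ a k)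
    (hmass : ∀ n, truncMass a n ≤ 1) (N : ℕ) :
    ∑ k ∈ Icc 1 N, (k : ℝ) * coagRate a k ≤ truncMean a N ^ 2 := by
  have h := sum_sub_mul_coagRate a N 0
  simp only [sub_zero] at h
  have hloss : ∑ l ∈ Icc 1 N, (0 - l) * l * a l * (1 - truncMass a (N - l)) ≤ 0 :=
    sum_nonpos fun l hl => by
      have := ha l (mem_Icc.1 hl).1
      have := hmass (N - l)
      have : (0 : ℝ) ≤ l * l * a l * (1 - truncMass a (N - l)) := by
        apply mul_nonneg (by positivity); linarith
      linarith
  linarith [triangleSum_le_truncMean_sq ha N]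

theorem truncMean_sq_add_mul_sum_coagRate_le (ha : ∀ k, 1 ≤ k → 0 ≤ a k)
    (hmass : ∀ n, truncMass a n ≤ 1) {M N : ℕ} (hMN : 2 * M ≤ N) :
    truncMean a M ^ 2 + N * ∑ k ∈ Icc 1 N, coagRate a k ≤
      ∑ k ∈ Icc 1 N, (k : ℝ) * coagRate a k := by
  have h := sum_sub_mul_coagRate a N N
  rw [sum_congr rfl fun (k : ℕ) _ => sub_mul (k : ℝ) (N : ℝ) (coagRate a k), sum_sub_distrib,
    ← mul_sum] at h
  have hloss : 0 ≤ ∑ l ∈ Icc 1 N, ((N : ℝ) - l) * l * a l * (1 - truncMass a (N - l)) :=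
    sum_nonneg fun l hl => by
      have := ha l (mem_Icc.1 hl).1
      have := hmass (N - l)
      have : (0 : ℝ) ≤ (N : ℝ) - l := by
        simp only [sub_nonneg, Nat.cast_le]; exact (mem_Icc.1 hl).2
      apply mul_nonneg (by positivity); linarith
  linarith [truncMean_sq_le_triangleSum ha hMN]

theorem truncMass_le_one (ha : ∀ k, 1 ≤ k → 0 ≤ a k) (hmass : HasSum (fun k => a (k + 1)) 1)
    (N : ℕ) : truncMass a N ≤ 1 := by
  rw [truncMass, sum_Icc_one_eq_sum_range]
  exact sum_le_hasSum _ (fun i _ => ha (i + 1) i.succ_pos) hmass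

theorem truncMean_nonneg (ha : ∀ k, 1 ≤ k → 0 ≤ a k) (N : ℕ) : 0 ≤ truncMean a N :=
  sum_nonneg fun k hk => mul_nonneg k.cast_nonneg (ha k (mem_Icc.1 hk).1)

theorem mean_nonneg (ha : ∀ k, 1 ≤ k → 0 ≤ a k) : 0 ≤ mean a :=
  tsum_nonneg fun i => mul_nonneg (by positivity) (ha (i + 1) i.succ_pos)

theorem truncMean_le_mean (ha : ∀ k, 1 ≤ k → 0 ≤ a k)
    (hmean : Summable fun k : ℕ => ((k : ℝ) + 1) * a (k + 1)) (N : ℕ) :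
    truncMean a N ≤ mean a := by
  rw [truncMean_eq_sum_range]
  exact hmean.sum_le_tsum _ fun i _ => mul_nonneg (by positivity) (ha (i + 1) i.succ_pos)

theorem tendsto_truncMean (hmean : Summable fun k : ℕ => ((k : ℝ) + 1) * a (k + 1)) :
    Tendsto (truncMean a) atTop (𝓝 (mean a)) := by
  unfold mean
  simpa only [← truncMean_eq_sum_range] using hmean.hasSum.tendsto_sum_nat

-- Markov's inequality for the size distribution.
theorem mul_one_sub_truncMass_le (ha : ∀ k, 1 ≤ k → 0 ≤ a k)
    (hmass : HasSum (fun k => a (k + 1)) 1)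
    (hmean : Summable fun k : ℕ => ((k : ℝ) + 1) * a (k + 1)) (N : ℕ) :
    N * (1 - truncMass a N) ≤ mean a - truncMean a N := by
  have htail : 1 - truncMass a N = ∑' i, a (i + N + 1) := by
    rw [← hmass.tsum_eq, ← hmass.summable.sum_add_tsum_nat_add N, truncMass,
      sum_Icc_one_eq_sum_range]
    ring
  have hmeantail : mean a - truncMean a N = ∑' i, (((i + N : ℕ) : ℝ) + 1) * a (i + N + 1) := by
    rw [mean, ← hmean.sum_add_tsum_nat_add N, truncMean_eq_sum_range]
    ring
  rw [htail, hmeantail, ← tsum_mul_left]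
  refine Summable.tsum_le_tsum (fun i => mul_le_mul_of_nonneg_right ?_ (ha _ (by omega)))
    (((summable_nat_add_iff N).2 hmass.summable).mul_left _) ((summable_nat_add_iff N).2 hmean)
  push_cast
  linarith [i.cast_nonneg (α := ℝ)]

end Bounds

end Algebra

section Solution

open Set

def IsSmoluchowskiSolution (T : ℝ) (v : ℕ → ℝ → ℝ) : Prop :=
  ∀ k, 1 ≤ k → ∀ t ∈ Ico (0 : ℝ) T, HasDerivWithinAt (v k) (coagRate (v · t) k) (Ico 0 T) t

theorem sub_eq_integral_of_hasDerivWithinAt_Ico {F F' : ℝ → ℝ} {a b t : ℝ}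
    (hF : ∀ x ∈ Ico a b, HasDerivWithinAt F (F' x) (Ico a b) x) (hF' : ContinuousOn F' (Ico a b))
    (ht : t ∈ Ico a b) : F t - F a = ∫ u in a..t, F' u := by
  have hsub : Icc a t ⊆ Ico a b := Icc_subset_Ico_right ht.2
  refine (integral_eq_sub_of_hasDerivAt_of_le ht.1
    (fun x hx => (hF x (hsub hx)).continuousWithinAt.mono hsub)
    (fun x hx => (hF x (hsub (Ioo_subset_Icc_self hx))).hasDerivAt
      (Ico_mem_nhds hx.1 (hx.2.trans ht.2)))
    ((hF'.mono (uIcc_subset_Ico_of_mem ht)).intervalIntegrable)).symm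

variable {T : ℝ} {v : ℕ → ℝ → ℝ}

namespace IsSmoluchowskiSolution

theorem continuousOn (hv : IsSmoluchowskiSolution T v) {k : ℕ} (hk : 1 ≤ k) :
    ContinuousOn (v k) (Ico 0 T) :=
  fun t ht => (hv k hk t ht).continuousWithinAt

theorem continuousOn_coagRate (hv : IsSmoluchowskiSolution T v) {k : ℕ} (hk : 1 ≤ k) :
    ContinuousOn (fun t => coagRate (v · t) k) (Ico 0 T) :=
  (continuousOn_const.mul (hv.continuousOn hk)).add <| continuousOn_const.mul <|
    continuousOn_finsetSum _ fun l hl => by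
      have hl := Finset.mem_Ico.1 hl
      exact (hv.continuousOn hl.1).mul (hv.continuousOn (by omega))

theorem hasDerivWithinAt_truncMass (hv : IsSmoluchowskiSolution T v) (N : ℕ) {t : ℝ}
    (ht : t ∈ Ico 0 T) :
    HasDerivWithinAt (fun s => truncMass (v · s) N)
      (∑ k ∈ Finset.Icc 1 N, coagRate (v · t) k) (Ico 0 T) t :=
  HasDerivWithinAt.fun_sum fun k hk => hv k (Finset.mem_Icc.1 hk).1 t ht

theorem hasDerivWithinAt_truncMean (hv : IsSmoluchowskiSolution T v) (N : ℕ) {t : ℝ}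
    (ht : t ∈ Ico 0 T) :
    HasDerivWithinAt (fun s => truncMean (v · s) N)
      (∑ k ∈ Finset.Icc 1 N, (k : ℝ) * coagRate (v · t) k) (Ico 0 T) t :=
  HasDerivWithinAt.fun_sum fun k hk => (hv k (Finset.mem_Icc.1 hk).1 t ht).const_mul _

theorem continuousOn_truncMean (hv : IsSmoluchowskiSolution T v) (N : ℕ) :
    ContinuousOn (fun s => truncMean (v · s) N) (Ico 0 T) :=
  fun _ ht => (hv.hasDerivWithinAt_truncMean N ht).continuousWithinAt

theorem continuousOn_sum_coagRate (hv : IsSmoluchowskiSolution T v) (N : ℕ) :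
    ContinuousOn (fun t => ∑ k ∈ Finset.Icc 1 N, coagRate (v · t) k) (Ico 0 T) :=
  continuousOn_finsetSum _ fun _ hk => hv.continuousOn_coagRate (Finset.mem_Icc.1 hk).1

theorem continuousOn_sum_mul_coagRate (hv : IsSmoluchowskiSolution T v) (N : ℕ) :
    ContinuousOn (fun t => ∑ k ∈ Finset.Icc 1 N, (k : ℝ) * coagRate (v · t) k) (Ico 0 T) :=
  continuousOn_finsetSum _ fun _ hk =>
    continuousOn_const.mul (hv.continuousOn_coagRate (Finset.mem_Icc.1 hk).1)

theorem truncMass_sub_truncMass (hv : IsSmoluchowskiSolution T v) (N : ℕ) {t : ℝ}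
    (ht : t ∈ Ico 0 T) :
    truncMass (v · t) N - truncMass (v · 0) N =
      ∫ u in 0..t, ∑ k ∈ Finset.Icc 1 N, coagRate (v · u) k :=
  sub_eq_integral_of_hasDerivWithinAt_Ico (fun _ hx => hv.hasDerivWithinAt_truncMass N hx)
    (hv.continuousOn_sum_coagRate N) ht

theorem truncMean_sub_truncMean (hv : IsSmoluchowskiSolution T v) (N : ℕ) {t : ℝ}
    (ht : t ∈ Ico 0 T) :
    truncMean (v · t) N - truncMean (v · 0) N =
      ∫ u in 0..t, ∑ k ∈ Finset.Icc 1 N, (k : ℝ) * coagRate (v · u) k :=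
  sub_eq_integral_of_hasDerivWithinAt_Ico (fun _ hx => hv.hasDerivWithinAt_truncMean N hx)
    (hv.continuousOn_sum_mul_coagRate N) ht

end IsSmoluchowskiSolution

theorem mean_le_inv_sub (hnn : ∀ k, 1 ≤ k → ∀ t ∈ Ico (0 : ℝ) T, 0 ≤ v k t)
    (hv : IsSmoluchowskiSolution T v)
    (hsum : ∀ t ∈ Ico (0 : ℝ) T, HasSum (fun k => v (k + 1) t) 1)
    (hmean : ∀ t ∈ Ico (0 : ℝ) T, Summable fun k : ℕ => ((k : ℝ) + 1) * v (k + 1) t)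
    (hE0 : mean (v · 0) ≤ T⁻¹) {t : ℝ} (ht : t ∈ Ico 0 T) : mean (v · t) ≤ (T - t)⁻¹ := by
  have h0 : (0 : ℝ) ∈ Ico 0 T := ⟨le_rfl, ht.1.trans_lt ht.2⟩
  refine le_of_tendsto' (tendsto_truncMean (hmean t ht)) fun N => ?_
  refine le_inv_sub_of_hasDerivWithinAt_le_sq (fun x hx => hv.hasDerivWithinAt_truncMean N hx)
    (fun x hx => ?_) ((truncMean_le_mean (fun k hk => hnn k hk 0 h0) (hmean 0 h0) N).trans hE0) ht
  exact sum_mul_coagRate_le_truncMean_sq (fun k hk => hnn k hk x hx)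
    (truncMass_le_one (fun k hk => hnn k hk x hx) (hsum x hx)) N

theorem truncMean_sub_le_integral_sq (hnn : ∀ k, 1 ≤ k → ∀ t ∈ Ico (0 : ℝ) T, 0 ≤ v k t)
    (hv : IsSmoluchowskiSolution T v)
    (hsum : ∀ t ∈ Ico (0 : ℝ) T, HasSum (fun k => v (k + 1) t) 1) (N : ℕ) {t : ℝ}
    (ht : t ∈ Ico 0 T) :
    truncMean (v · t) N - truncMean (v · 0) N ≤ ∫ u in 0..t, truncMean (v · u) N ^ 2 := by
  have hsub := uIcc_subset_Ico_of_mem ht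
  rw [hv.truncMean_sub_truncMean N ht]
  refine integral_mono_on ht.1 ((hv.continuousOn_sum_mul_coagRate N).mono hsub).intervalIntegrable
    (((hv.continuousOn_truncMean N).pow 2).mono hsub).intervalIntegrable fun u hu => ?_
  have hu : u ∈ Ico 0 T := Icc_subset_Ico_right ht.2 hu
  exact sum_mul_coagRate_le_truncMean_sq (fun k hk => hnn k hk u hu)
    (truncMass_le_one (fun k hk => hnn k hk u hu) (hsum u hu)) N

-- The flux out of `[1, N]` is paid for by mass lost beyond `N`, which Markov's inequality bounds.
theorem integral_truncMean_sq_sub_le (hnn : ∀ k, 1 ≤ k → ∀ t ∈ Ico (0 : ℝ) T, 0 ≤ v k t)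
    (hv : IsSmoluchowskiSolution T v)
    (hsum : ∀ t ∈ Ico (0 : ℝ) T, HasSum (fun k => v (k + 1) t) 1)
    (hmean : ∀ t ∈ Ico (0 : ℝ) T, Summable fun k : ℕ => ((k : ℝ) + 1) * v (k + 1) t)
    {M N : ℕ} (hMN : 2 * M ≤ N) {t : ℝ} (ht : t ∈ Ico 0 T) :
    (∫ u in 0..t, truncMean (v · u) M ^ 2) - (mean (v · t) - truncMean (v · t) N) ≤
      truncMean (v · t) N - truncMean (v · 0) N := by
  have h0 : (0 : ℝ) ∈ Ico 0 T := ⟨le_rfl, ht.1.trans_lt ht.2⟩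
  have hsub := uIcc_subset_Ico_of_mem ht
  have ha : ∀ u ∈ Ico 0 T, ∀ k, 1 ≤ k → 0 ≤ v k u := fun u hu k hk => hnn k hk u hu
  have hsq : IntervalIntegrable (fun u => truncMean (v · u) M ^ 2) volume 0 t :=
    (((hv.continuousOn_truncMean M).pow 2).mono hsub).intervalIntegrable
  have hloss := (((hv.continuousOn_sum_coagRate N).mono hsub).intervalIntegrable
    (μ := volume)).const_mul (N : ℝ)
  have hgain : (∫ u in 0..t, truncMean (v · u) M ^ 2) +
      N * (truncMass (v · t) N - truncMass (v · 0) N) ≤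
        truncMean (v · t) N - truncMean (v · 0) N := by
    rw [hv.truncMass_sub_truncMass N ht, ← intervalIntegral.integral_const_mul,
      ← intervalIntegral.integral_add hsq hloss, hv.truncMean_sub_truncMean N ht]
    refine integral_mono_on ht.1 (hsq.add hloss)
      ((hv.continuousOn_sum_mul_coagRate N).mono hsub).intervalIntegrable fun u hu => ?_
    have hu : u ∈ Ico 0 T := Icc_subset_Ico_right ht.2 hu
    exact truncMean_sq_add_mul_sum_coagRate_le (ha u hu)
      (truncMass_le_one (ha u hu) (hsum u hu)) hMN
  have hmarkov := mul_one_sub_truncMass_le (ha t ht) (hsum t ht) (hmean t ht) N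
  have hmass0 : (N : ℝ) * truncMass (v · 0) N ≤ N :=
    mul_le_of_le_one_right N.cast_nonneg (truncMass_le_one (ha 0 h0) (hsum 0 h0) N)
  rw [mul_sub] at hgain hmarkov
  linarith

theorem aestronglyMeasurable_mean (hv : IsSmoluchowskiSolution T v)
    (hmean : ∀ t ∈ Ico (0 : ℝ) T, Summable fun k : ℕ => ((k : ℝ) + 1) * v (k + 1) t)
    {t : ℝ} (ht : t ∈ Ico 0 T) :
    AEStronglyMeasurable (fun u => mean (v · u)) (volume.restrict (Ι 0 t)) := by
  have hI : Ι 0 t ⊆ Ico 0 T := uIoc_subset_uIcc.trans (uIcc_subset_Ico_of_mem ht)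
  exact aestronglyMeasurable_of_tendsto_ae atTop
    (fun N => ((hv.continuousOn_truncMean N).mono hI).aestronglyMeasurable measurableSet_uIoc)
    (ae_restrict_of_forall_mem measurableSet_uIoc fun u hu => tendsto_truncMean (hmean u (hI hu)))

theorem intervalIntegrable_mean_sq (hnn : ∀ k, 1 ≤ k → ∀ t ∈ Ico (0 : ℝ) T, 0 ≤ v k t)
    (hv : IsSmoluchowskiSolution T v)
    (hmean : ∀ t ∈ Ico (0 : ℝ) T, Summable fun k : ℕ => ((k : ℝ) + 1) * v (k + 1) t)
    {t B : ℝ} (ht : t ∈ Ico 0 T) (hB : ∀ u ∈ Icc 0 t, mean (v · u) ≤ B) :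
    IntervalIntegrable (fun u => mean (v · u) ^ 2) volume 0 t := by
  have hIcc : Ι 0 t ⊆ Icc 0 t := uIoc_subset_uIcc.trans (uIcc_of_le ht.1).subset
  have hI : Ι 0 t ⊆ Ico 0 T := hIcc.trans (Icc_subset_Ico_right ht.2)
  refine (intervalIntegrable_const (c := B ^ 2)).mono_fun'
    ((aestronglyMeasurable_mean hv hmean ht).pow 2)
    (ae_restrict_of_forall_mem measurableSet_uIoc fun u hu => ?_)
  have hE := mean_nonneg fun k hk => hnn k hk u (hI hu)
  dsimp only
  rw [Real.norm_of_nonneg (sq_nonneg _)]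
  exact pow_le_pow_left₀ hE (hB u (hIcc hu)) 2

theorem tendsto_integral_truncMean_sq (hnn : ∀ k, 1 ≤ k → ∀ t ∈ Ico (0 : ℝ) T, 0 ≤ v k t)
    (hv : IsSmoluchowskiSolution T v)
    (hmean : ∀ t ∈ Ico (0 : ℝ) T, Summable fun k : ℕ => ((k : ℝ) + 1) * v (k + 1) t)
    {t B : ℝ} (ht : t ∈ Ico 0 T) (hB : ∀ u ∈ Icc 0 t, mean (v · u) ≤ B) :
    Tendsto (fun N => ∫ u in 0..t, truncMean (v · u) N ^ 2) atTop
      (𝓝 (∫ u in 0..t, mean (v · u) ^ 2)) := by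
  have hIcc : Ι 0 t ⊆ Icc 0 t := uIoc_subset_uIcc.trans (uIcc_of_le ht.1).subset
  have hI : Ι 0 t ⊆ Ico 0 T := hIcc.trans (Icc_subset_Ico_right ht.2)
  refine tendsto_integral_filter_of_dominated_convergence (fun _ => B ^ 2)
    (Eventually.of_forall fun N =>
      (((hv.continuousOn_truncMean N).pow 2).mono hI).aestronglyMeasurable measurableSet_uIoc)
    (Eventually.of_forall fun N => ae_of_all _ fun u hu => ?_) intervalIntegrable_const
    (ae_of_all _ fun u hu => (tendsto_truncMean (hmean u (hI hu))).pow 2)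
  have ha : ∀ k, 1 ≤ k → 0 ≤ v k u := fun k hk => hnn k hk u (hI hu)
  rw [Real.norm_of_nonneg (sq_nonneg _)]
  exact pow_le_pow_left₀ (truncMean_nonneg ha N)
    ((truncMean_le_mean ha (hmean u (hI hu)) N).trans (hB u (hIcc hu))) 2

theorem mean_eq_add_integral_sq (hnn : ∀ k, 1 ≤ k → ∀ t ∈ Ico (0 : ℝ) T, 0 ≤ v k t)
    (hv : IsSmoluchowskiSolution T v)
    (hsum : ∀ t ∈ Ico (0 : ℝ) T, HasSum (fun k => v (k + 1) t) 1)
    (hmean : ∀ t ∈ Ico (0 : ℝ) T, Summable fun k : ℕ => ((k : ℝ) + 1) * v (k + 1) t)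
    {t B : ℝ} (ht : t ∈ Ico 0 T) (hB : ∀ u ∈ Icc 0 t, mean (v · u) ≤ B) :
    mean (v · t) = mean (v · 0) + ∫ u in 0..t, mean (v · u) ^ 2 := by
  have h0 : (0 : ℝ) ∈ Ico 0 T := ⟨le_rfl, ht.1.trans_lt ht.2⟩
  set I := ∫ u in 0..t, mean (v · u) ^ 2
  have hsq := tendsto_integral_truncMean_sq hnn hv hmean ht hB
  have hdiff : Tendsto (fun N => truncMean (v · t) N - truncMean (v · 0) N) atTop
      (𝓝 (mean (v · t) - mean (v · 0))) :=
    (tendsto_truncMean (hmean t ht)).sub (tendsto_truncMean (hmean 0 h0))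
  have hlow : Tendsto (fun N => (∫ u in 0..t, truncMean (v · u) (N / 2) ^ 2) -
      (mean (v · t) - truncMean (v · t) N)) atTop (𝓝 (I - 0)) :=
    (hsq.comp (Nat.tendsto_div_const_atTop two_ne_zero)).sub
      (sub_self (mean (v · t)) ▸ tendsto_const_nhds.sub (tendsto_truncMean (hmean t ht)))
  have hle := le_of_tendsto_of_tendsto' hdiff hsq fun N =>
    truncMean_sub_le_integral_sq hnn hv hsum N ht
  have hge := le_of_tendsto_of_tendsto' hlow hdiff fun N =>
    integral_truncMean_sq_sub_le hnn hv hsum hmean (Nat.mul_div_le N 2) ht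
  linarith

end Solution

end Smoluchowski

open Smoluchowski

theorem stmt9_general (T : ℝ) (v : ℕ → ℝ → ℝ)
    (hnn : ∀ k : ℕ, 1 ≤ k → ∀ t ∈ Set.Ico (0 : ℝ) T, 0 ≤ v k t)
    (hderiv : ∀ k : ℕ, 1 ≤ k → ∀ t ∈ Set.Ico (0 : ℝ) T,
      HasDerivWithinAt (v k)
        (-(k : ℝ) * v k t + (k : ℝ) / 2 * ∑ l ∈ Finset.Ico 1 k, v l t * v (k - l) t)
        (Set.Ico 0 T) t)
    (hsum : ∀ t ∈ Set.Ico (0 : ℝ) T, HasSum (fun k : ℕ => v (k + 1) t) 1)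
    (hmean : ∀ t ∈ Set.Ico (0 : ℝ) T, Summable (fun k : ℕ => ((k : ℝ) + 1) * v (k + 1) t))
    (hE0 : ∑' k : ℕ, ((k : ℝ) + 1) * v (k + 1) 0 = 1 / T) :
    ∀ t ∈ Set.Ico (0 : ℝ) T, ∑' k : ℕ, ((k : ℝ) + 1) * v (k + 1) t = 1 / (T - t) := by
  have hv : IsSmoluchowskiSolution T v := hderiv
  have hE0' : mean (v · 0) = T⁻¹ := hE0.trans (one_div T)
  have hbound : ∀ s ∈ Set.Ico 0 T, ∀ u ∈ Set.Icc 0 s, mean (v · u) ≤ (T - s)⁻¹ := fun s hs u hu =>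
    (mean_le_inv_sub hnn hv hsum hmean hE0'.le ⟨hu.1, hu.2.trans_lt hs.2⟩).trans
      (inv_anti₀ (sub_pos.2 hs.2) (by linarith [hu.2]))
  intro t ht
  rw [one_div]
  exact eq_inv_sub_of_eq_add_integral_sq (E := fun s => mean (v · s))
    (fun s hs => intervalIntegrable_mean_sq hnn hv hmean hs (hbound s hs))
    (fun s hs => mean_eq_add_integral_sq hnn hv hsum hmean hs (hbound s hs)) hE0' ht

theorem stmt9 (T : ℝ) (hT : 0 < T) (v : ℕ → ℝ → ℝ)
    (hnn : ∀ k : ℕ, 1 ≤ k → ∀ t ∈ Set.Ico (0 : ℝ) T, 0 ≤ v k t)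
    (hderiv : ∀ k : ℕ, 1 ≤ k → ∀ t ∈ Set.Ico (0 : ℝ) T,
      HasDerivWithinAt (v k)
        (-(k : ℝ) * v k t + (k : ℝ) / 2 * ∑ l ∈ Finset.Ico 1 k, v l t * v (k - l) t)
        (Set.Ico 0 T) t)
    (hsum : ∀ t ∈ Set.Ico (0 : ℝ) T, HasSum (fun k : ℕ => v (k + 1) t) 1)
    (hmean : ∀ t ∈ Set.Ico (0 : ℝ) T, Summable (fun k : ℕ => ((k : ℝ) + 1) * v (k + 1) t))
    (hE0 : ∑' k : ℕ, ((k : ℝ) + 1) * v (k + 1) 0 = 1 / T) :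
    ∀ t ∈ Set.Ico (0 : ℝ) T, ∑' k : ℕ, ((k : ℝ) + 1) * v (k + 1) t = 1 / (T - t) :=
  stmt9_general T v hnn hderiv hsum hmean hE0
end

section
/- Let a < y and let F : [a,y] × ℝ → ℝ be continuous, strictly positive, and Lipschitz in its second variable uniformly in the first (there is L such that |F(t,w) − F(t,w')| ≤ L|w − w'| for all t ∈ [a,y] and w, w' ∈ ℝ). Then there exists a unique continuous function υ : [a,y] → ℝ satisfying υ(t) = ∫_t^y (1/2)(1 − υ(s)²) · F(s, υ(s)) ds for all t ∈ [a,y]; moreover υ(y) = 0, 0 < υ(t) < 1 for all t ∈ [a,y), and υ is strictly decreasing on [a,y]. -/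
/-!
Clamping the state to `[-1, 1]` makes the desingularized field `½ (1 - w²) F(t, w)` globally
Lipschitz and bounded, so Picard–Lindelöf solves the clamped problem backwards from `υ y = 0`. The
constants `±1` are equilibria of the clamped field, so by uniqueness the solution never reaches
them and stays in `(-1, 1)`. There the clamping is inactive and the field is strictly positive,
so `υ` is strictly decreasing, hence positive before `y`. Uniqueness for the integral equation is
Grönwall uniqueness for the ODE, whose field is Lipschitz on bounded sets uniformly in time.
-/

open Set Metric MeasureTheory Function
open scoped NNReal

lemma LipschitzOnWith.mul_of_norm_le {α R : Type*} [PseudoMetricSpace α] [SeminormedRing R]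
    {f g : α → R} {s : Set α} {Kf Kg Mf Mg : ℝ≥0}
    (hf : LipschitzOnWith Kf f s) (hg : LipschitzOnWith Kg g s)
    (hfM : ∀ x ∈ s, ‖f x‖ ≤ Mf) (hgM : ∀ x ∈ s, ‖g x‖ ≤ Mg) :
    LipschitzOnWith (Mf * Kg + Mg * Kf) (fun x => f x * g x) s := by
  refine .of_dist_le_mul fun x hx x' hx' => ?_
  have hf' := hf.dist_le_mul x hx x' hx'
  have hg' := hg.dist_le_mul x hx x' hx'
  rw [dist_eq_norm] at hf' hg' ⊢
  calc ‖f x * g x - f x' * g x'‖ = ‖f x * (g x - g x') + (f x - f x') * g x'‖ := by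
        congr 1; noncomm_ring
    _ ≤ ‖f x‖ * ‖g x - g x'‖ + ‖f x - f x'‖ * ‖g x'‖ :=
        norm_add_le_of_le (norm_mul_le _ _) (norm_mul_le _ _)
    _ ≤ Mf * (Kg * dist x x') + Kf * dist x x' * Mg := by
        gcongr
        exacts [hfM x hx, hgM x' hx']
    _ = ↑(Mf * Kg + Mg * Kf) * dist x x' := by push_cast; ring

lemma IsPreconnected.mapsTo_Ioo_of_forall_ne {α : Type*} [TopologicalSpace α] {s : Set α}
    (hs : IsPreconnected s) {f : α → ℝ} (hf : ContinuousOn f s) {x₀ : α} (hx₀ : x₀ ∈ s)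
    {l u : ℝ} (h₀ : f x₀ ∈ Ioo l u) (hl : ∀ x ∈ s, f x ≠ l) (hu : ∀ x ∈ s, f x ≠ u) :
    MapsTo f s (Ioo l u) := by
  have himage := hs.image f hf
  intro x hx
  by_contra hout
  rcases not_and_or.1 hout with hlx | hxu
  · obtain ⟨x', hx', hx'l⟩ :=
      himage.Icc_subset (mem_image_of_mem f hx) (mem_image_of_mem f hx₀) ⟨not_lt.1 hlx, h₀.1.le⟩
    exact hl x' hx' hx'l
  · obtain ⟨x', hx', hx'u⟩ :=
      himage.Icc_subset (mem_image_of_mem f hx₀) (mem_image_of_mem f hx) ⟨h₀.2.le, not_lt.1 hxu⟩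
    exact hu x' hx' hx'u

lemma ContinuousOn.comp_graph {α E F : Type*} [TopologicalSpace α] [TopologicalSpace E]
    [TopologicalSpace F] {G : α → E → F} {s : Set α} (hG : ContinuousOn (uncurry G) (s ×ˢ univ))
    {υ : α → E} (hυ : ContinuousOn υ s) : ContinuousOn (fun t => G t (υ t)) s :=
  hG.comp (continuousOn_id.prodMk hυ) fun _ ht => ⟨ht, mem_univ _⟩

section
variable {E : Type*} [NormedAddCommGroup E] [NormedSpace ℝ E] {a b : ℝ}

lemma hasDerivWithinAt_Iic_of_eq_integral [CompleteSpace E] {G υ : ℝ → E}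
    (hG : ContinuousOn G (Icc a b)) (hυ : ∀ t ∈ Icc a b, υ t = ∫ s in t..b, G s) {t : ℝ}
    (ht : t ∈ Ioc a b) :
    HasDerivWithinAt υ (-G t) (Iic t) t := by
  have hmem : Icc a b ∈ nhdsWithin t (Iic t) := Icc_mem_nhdsLE_of_mem ht
  have hint : IntervalIntegrable G volume t b :=
    (hG.mono (Icc_subset_Icc_left ht.1.le)).intervalIntegrable_of_Icc ht.2
  have hderiv := intervalIntegral.integral_hasDerivWithinAt_left hint
    ⟨Icc a b, hmem, hG.aestronglyMeasurable measurableSet_Icc⟩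
    ((hG t (Ioc_subset_Icc_self ht)).mono_of_mem_nhdsWithin hmem) (s := Iic t)
  exact hderiv.congr_of_eventuallyEq (Filter.eventuallyEq_of_mem hmem hυ)
    (hυ t (Ioc_subset_Icc_self ht))

lemma eq_add_integral_of_hasDerivWithinAt [CompleteSpace E] {f g : ℝ → E}
    (hf : ∀ t ∈ Icc a b, HasDerivWithinAt f (-g t) (Icc a b) t) (hg : ContinuousOn g (Icc a b))
    {t : ℝ} (ht : t ∈ Icc a b) : f t = f b + ∫ s in t..b, g s := by
  have hsub : Icc t b ⊆ Icc a b := Icc_subset_Icc_left ht.1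
  have hFTC := intervalIntegral.integral_eq_sub_of_hasDeriv_right_of_le ht.2
    (fun s hs => (hf s (hsub hs)).continuousWithinAt.mono hsub)
    (fun s hs => ((hf s (hsub (Ioo_subset_Icc_self hs))).hasDerivAt
      (Icc_mem_nhds (ht.1.trans_lt hs.1) hs.2)).hasDerivWithinAt)
    ((hg.mono hsub).neg.intervalIntegrable_of_Icc ht.2)
  rw [intervalIntegral.integral_neg, neg_eq_iff_eq_neg, neg_sub] at hFTC
  rw [hFTC, add_sub_cancel]

lemma exists_hasDerivWithinAt_Icc_of_lipschitzWith [CompleteSpace E] {v : ℝ → E → E}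
    (t₀ : Icc a b) (x₀ : E) {K C : ℝ≥0} (hlip : ∀ t ∈ Icc a b, LipschitzWith K (v t))
    (hcont : ∀ x, ContinuousOn (v · x) (Icc a b)) (hbound : ∀ t ∈ Icc a b, ∀ x, ‖v t x‖ ≤ C) :
    ∃ α : ℝ → E, α t₀ = x₀ ∧ ∀ t ∈ Icc a b, HasDerivWithinAt α (v t (α t)) (Icc a b) t := by
  have hab : 0 ≤ b - a := sub_nonneg.2 (t₀.2.1.trans t₀.2.2)
  have hPL : IsPicardLindelof v t₀ x₀ ⟨C * (b - a), by positivity⟩ 0 C K :=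
    { lipschitzOnWith := fun t ht => (hlip t ht).lipschitzOnWith
      continuousOn := fun x _ => hcont x
      norm_le := fun t ht x _ => hbound t ht x
      mul_max_le := by
        rw [NNReal.coe_zero, sub_zero]
        show (C : ℝ) * _ ≤ C * (b - a)
        gcongr
        exact max_le (by linarith [t₀.2.1]) (by linarith [t₀.2.2]) }
  exact hPL.exists_eq_forall_mem_Icc_hasDerivWithinAt₀

lemma ODE_solution_eqOn_const_of_equilibrium {v : ℝ → E → E} {K : ℝ≥0} {c : E} {f : ℝ → E}
    (hlip : ∀ t ∈ Icc a b, LipschitzWith K (v t)) (hc : ∀ t ∈ Icc a b, v t c = 0)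
    (hf : ∀ t ∈ Icc a b, HasDerivWithinAt f (v t (f t)) (Icc a b) t)
    {t₀ : ℝ} (ht₀ : t₀ ∈ Icc a b) (hft₀ : f t₀ = c) : EqOn f (fun _ => c) (Icc t₀ b) := by
  have hsub : Icc t₀ b ⊆ Icc a b := Icc_subset_Icc_left ht₀.1
  refine ODE_solution_unique_of_mem_Icc_right (s := fun _ => univ)
    (fun t ht => (hlip t (hsub (Ico_subset_Icc_self ht))).lipschitzOnWith)
    (fun t ht => (hf t (hsub ht)).continuousWithinAt.mono hsub)
    (fun t ht => (hf t (hsub (Ico_subset_Icc_self ht))).mono_of_mem_nhdsWithin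
      (Icc_mem_nhdsGE_of_mem ⟨ht₀.1.trans ht.1, ht.2⟩))
    (fun _ _ => mem_univ _) continuousOn_const (fun t ht => ?_) (fun _ _ => mem_univ _) hft₀
  rw [hc t (hsub (Ico_subset_Icc_self ht))]
  exact hasDerivWithinAt_const _ _ _

theorem eqOn_of_eq_integral [CompleteSpace E] {G : ℝ → E → E} (hab : a ≤ b)
    (hG : ContinuousOn (uncurry G) (Icc a b ×ˢ univ))
    (hlip : ∀ M, ∃ K, ∀ t ∈ Icc a b, LipschitzOnWith K (G t) (closedBall 0 M))
    {υ₁ υ₂ : ℝ → E} (hc₁ : ContinuousOn υ₁ (Icc a b))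
    (he₁ : ∀ t ∈ Icc a b, υ₁ t = ∫ s in t..b, G s (υ₁ s)) (hc₂ : ContinuousOn υ₂ (Icc a b))
    (he₂ : ∀ t ∈ Icc a b, υ₂ t = ∫ s in t..b, G s (υ₂ s)) : EqOn υ₁ υ₂ (Icc a b) := by
  obtain ⟨M₁, hM₁⟩ := isCompact_Icc.exists_bound_of_continuousOn hc₁
  obtain ⟨M₂, hM₂⟩ := isCompact_Icc.exists_bound_of_continuousOn hc₂
  obtain ⟨K, hK⟩ := hlip (max M₁ M₂)
  have hb : b ∈ Icc a b := right_mem_Icc.2 hab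
  refine ODE_solution_unique_of_mem_Icc_left (v := fun t w => -G t w)
    (s := fun _ => closedBall 0 (max M₁ M₂))
    (fun t ht => (hK t (Ioc_subset_Icc_self ht)).neg) hc₁
    (fun t ht => hasDerivWithinAt_Iic_of_eq_integral (hG.comp_graph hc₁) he₁ ht)
    (fun t ht => mem_closedBall_zero_iff.2
      ((hM₁ t (Ioc_subset_Icc_self ht)).trans (le_max_left _ _)))
    hc₂
    (fun t ht => hasDerivWithinAt_Iic_of_eq_integral (hG.comp_graph hc₂) he₂ ht)
    (fun t ht => mem_closedBall_zero_iff.2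
      ((hM₂ t (Ioc_subset_Icc_self ht)).trans (le_max_right _ _)))
    ?_
  rw [he₁ b hb, he₂ b hb, intervalIntegral.integral_same, intervalIntegral.integral_same]

end

noncomputable def desingularizedField (F : ℝ → ℝ → ℝ) (t w : ℝ) : ℝ := 1 / 2 * (1 - w ^ 2) * F t w

section
variable {a b L : ℝ} {F : ℝ → ℝ → ℝ}

lemma lipschitzOnWith_half_one_sub_sq (M : ℝ) :
    LipschitzOnWith M.toNNReal (fun w : ℝ => 1 / 2 * (1 - w ^ 2)) (closedBall 0 M) := by
  refine .of_dist_le_mul fun w hw w' hw' => ?_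
  rw [mem_closedBall_zero_iff, Real.norm_eq_abs] at hw hw'
  rw [Real.dist_eq, Real.dist_eq, Real.coe_toNNReal']
  have hsum : |-(w + w') / 2| ≤ max M 0 := by
    rw [abs_div, abs_neg, abs_two]
    linarith [abs_add_le w w', le_max_left M 0]
  calc |1 / 2 * (1 - w ^ 2) - 1 / 2 * (1 - w' ^ 2)| = |-(w + w') / 2| * |w - w'| := by
        rw [← abs_mul]; ring_nf
    _ ≤ max M 0 * |w - w'| := by gcongr

lemma continuousOn_desingularizedField (hFc : ContinuousOn (uncurry F) (Icc a b ×ˢ univ)) :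
    ContinuousOn (uncurry (desingularizedField F)) (Icc a b ×ˢ univ) :=
  (continuous_const.mul (continuous_const.sub (continuous_snd.pow 2))).continuousOn.mul hFc

lemma exists_lipschitzOnWith_desingularizedField
    (hFc : ContinuousOn (uncurry F) (Icc a b ×ˢ univ))
    (hLip : ∀ t ∈ Icc a b, ∀ w w' : ℝ, |F t w - F t w'| ≤ L * |w - w'|) (M : ℝ) :
    ∃ K, ∀ t ∈ Icc a b, LipschitzOnWith K (desingularizedField F t) (closedBall 0 M) := by
  obtain ⟨Cp, hCp⟩ := (isCompact_closedBall (0 : ℝ) M).exists_bound_of_continuousOn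
    (by fun_prop : Continuous fun w : ℝ => 1 / 2 * (1 - w ^ 2)).continuousOn
  obtain ⟨CF, hCF⟩ :=
    (isCompact_Icc.prod (isCompact_closedBall (0 : ℝ) M)).exists_bound_of_continuousOn
      (hFc.mono (prod_mono_right (subset_univ _)))
  refine ⟨Cp.toNNReal * L.toNNReal + CF.toNNReal * M.toNNReal, fun t ht => ?_⟩
  have hFt : LipschitzWith L.toNNReal (F t) := .of_dist_le_mul fun w w' =>
    (hLip t ht w w').trans (by rw [← Real.dist_eq]; gcongr; exact Real.le_coe_toNNReal L)
  exact (lipschitzOnWith_half_one_sub_sq M).mul_of_norm_le hFt.lipschitzOnWith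
    (fun w hw => (hCp w hw).trans (Real.le_coe_toNNReal _))
    (fun w hw => (hCF (t, w) ⟨ht, hw⟩).trans (Real.le_coe_toNNReal _))

lemma exists_hasDerivWithinAt_desingularizedField (hab : a ≤ b)
    (hFc : ContinuousOn (uncurry F) (Icc a b ×ˢ univ))
    (hLip : ∀ t ∈ Icc a b, ∀ w w' : ℝ, |F t w - F t w'| ≤ L * |w - w'|) :
    ∃ f : ℝ → ℝ, f b = 0 ∧ MapsTo f (Icc a b) (Ioo (-1) 1) ∧
      ∀ t ∈ Icc a b, HasDerivWithinAt f (-desingularizedField F t (f t)) (Icc a b) t := by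
  have hball : closedBall (0 : ℝ) 1 = Icc (-1) 1 := by
    rw [Real.closedBall_eq_Icc, zero_sub, zero_add]
  have hG := continuousOn_desingularizedField hFc
  obtain ⟨K, hK⟩ := exists_lipschitzOnWith_desingularizedField hFc hLip 1
  obtain ⟨C, hC⟩ :=
    (isCompact_Icc.prod (isCompact_closedBall (0 : ℝ) 1)).exists_bound_of_continuousOn
      (hG.mono (prod_mono_right (subset_univ _)))
  rw [hball] at hK hC
  let clamp (w : ℝ) : ℝ := projIcc (-1) 1 (by norm_num) w
  let v (t w : ℝ) : ℝ := -desingularizedField F t (clamp w)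
  have hv_lip : ∀ t ∈ Icc a b, LipschitzWith K (v t) := fun t ht => by
    have := ((hK t ht).to_restrict.comp (LipschitzWith.projIcc (by norm_num : (-1 : ℝ) ≤ 1))).neg
    rwa [mul_one] at this
  have hv_cont : ∀ w, ContinuousOn (v · w) (Icc a b) := fun w =>
    (hG.comp_graph continuousOn_const).neg
  have hv_bound : ∀ t ∈ Icc a b, ∀ w, ‖v t w‖ ≤ C.toNNReal := fun t ht w => by
    rw [norm_neg]
    exact (hC (t, clamp w) ⟨ht, Subtype.prop _⟩).trans (Real.le_coe_toNNReal C)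
  have hclamp : ∀ w ∈ Icc (-1 : ℝ) 1, clamp w = w := fun w hw =>
    congrArg Subtype.val (projIcc_of_mem _ hw)
  have hv_eq : ∀ c : ℝ, c ^ 2 = 1 → ∀ t, v t c = 0 := fun c hc t => by
    have hcmem : c ∈ Icc (-1 : ℝ) 1 := ⟨by nlinarith, by nlinarith⟩
    simp only [v, desingularizedField, hclamp c hcmem, hc, sub_self, mul_zero, zero_mul, neg_zero]
  obtain ⟨f, hfb : f b = 0, hf⟩ :=
    exists_hasDerivWithinAt_Icc_of_lipschitzWith ⟨b, right_mem_Icc.2 hab⟩ 0 hv_lip hv_cont hv_bound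
  have hf_ne : ∀ c : ℝ, c ^ 2 = 1 → ∀ t ∈ Icc a b, f t ≠ c := fun c hc t ht hft => by
    have hfc := ODE_solution_eqOn_const_of_equilibrium hv_lip (fun s _ => hv_eq c hc s) hf ht hft
      (right_mem_Icc.2 ht.2)
    rw [hfb] at hfc
    norm_num [← hfc] at hc
  have hf_mem : MapsTo f (Icc a b) (Ioo (-1) 1) :=
    isPreconnected_Icc.mapsTo_Ioo_of_forall_ne (fun t ht => (hf t ht).continuousWithinAt)
      (right_mem_Icc.2 hab) (by norm_num [hfb]) (hf_ne (-1) (by norm_num)) (hf_ne 1 (by norm_num))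
  refine ⟨f, hfb, hf_mem, fun t ht => ?_⟩
  simpa only [v, hclamp _ (Ioo_subset_Icc_self (hf_mem ht))] using hf t ht

theorem exists_desingularized_solution (hab : a ≤ b)
    (hFc : ContinuousOn (uncurry F) (Icc a b ×ˢ univ)) (hFpos : ∀ t ∈ Icc a b, ∀ w, 0 < F t w)
    (hLip : ∀ t ∈ Icc a b, ∀ w w' : ℝ, |F t w - F t w'| ≤ L * |w - w'|) :
    ∃ υ : ℝ → ℝ, ContinuousOn υ (Icc a b) ∧
      (∀ t ∈ Icc a b, υ t = ∫ s in t..b, desingularizedField F s (υ s)) ∧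
      υ b = 0 ∧ (∀ t ∈ Ico a b, υ t ∈ Ioo 0 1) ∧ StrictAntiOn υ (Icc a b) := by
  obtain ⟨f, hfb, hf_mem, hf'⟩ := exists_hasDerivWithinAt_desingularizedField hab hFc hLip
  have hf_cont : ContinuousOn f (Icc a b) := fun t ht => (hf' t ht).continuousWithinAt
  have hG_pos : ∀ t ∈ Icc a b, 0 < desingularizedField F t (f t) := fun t ht => by
    obtain ⟨hlo, hhi⟩ := hf_mem ht
    have hsq : 0 < 1 - f t ^ 2 := by nlinarith
    exact mul_pos (mul_pos one_half_pos hsq) (hFpos t ht _)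
  have hf_anti : StrictAntiOn f (Icc a b) :=
    strictAntiOn_of_hasDerivWithinAt_neg (convex_Icc a b) hf_cont
      (fun t ht => (hf' t (interior_subset ht)).mono interior_subset)
      (fun t ht => neg_neg_of_pos (hG_pos t (interior_subset ht)))
  refine ⟨f, hf_cont, fun t ht => ?_, hfb, fun t ht => ⟨?_, (hf_mem (Ico_subset_Icc_self ht)).2⟩,
    hf_anti⟩
  · rw [eq_add_integral_of_hasDerivWithinAt hf'
      ((continuousOn_desingularizedField hFc).comp_graph hf_cont) ht, hfb, zero_add]
  · exact hfb ▸ hf_anti (Ico_subset_Icc_self ht) (right_mem_Icc.2 hab) ht.2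

end

theorem stmt11 (a y : ℝ) (hay : a < y) (F : ℝ → ℝ → ℝ) (L : ℝ)
    (hFc : ContinuousOn (fun p : ℝ × ℝ => F p.1 p.2) (Set.Icc a y ×ˢ Set.univ))
    (hFpos : ∀ t ∈ Set.Icc a y, ∀ w : ℝ, 0 < F t w)
    (hLip : ∀ t ∈ Set.Icc a y, ∀ w w' : ℝ, |F t w - F t w'| ≤ L * |w - w'|) :
    (∃ υ : ℝ → ℝ, ContinuousOn υ (Set.Icc a y) ∧
      (∀ t ∈ Set.Icc a y, υ t = ∫ s in t..y, (1 / 2) * (1 - υ s ^ 2) * F s (υ s)) ∧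
      υ y = 0 ∧ (∀ t ∈ Set.Ico a y, υ t ∈ Set.Ioo (0 : ℝ) 1) ∧
      StrictAntiOn υ (Set.Icc a y)) ∧
    ∀ υ₁ υ₂ : ℝ → ℝ,
      ContinuousOn υ₁ (Set.Icc a y) →
      (∀ t ∈ Set.Icc a y, υ₁ t = ∫ s in t..y, (1 / 2) * (1 - υ₁ s ^ 2) * F s (υ₁ s)) →
      ContinuousOn υ₂ (Set.Icc a y) →
      (∀ t ∈ Set.Icc a y, υ₂ t = ∫ s in t..y, (1 / 2) * (1 - υ₂ s ^ 2) * F s (υ₂ s)) →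
      Set.EqOn υ₁ υ₂ (Set.Icc a y) :=
  ⟨exists_desingularized_solution hay.le hFc hFpos hLip,
    fun _ _ hc₁ he₁ hc₂ he₂ => eqOn_of_eq_integral hay.le (continuousOn_desingularizedField hFc)
      (exists_lipschitzOnWith_desingularizedField hFc hLip) hc₁ he₁ hc₂ he₂⟩
end

section
/- Let X : [0,∞) × [0,1] → ℝ be continuous such that for every t the function X(t,·) is of the form X(t,z) = ∑_{k ≥ 1} c_k(t) z^k with c_k(t) ≥ 0 and ∑_{k ≥ 1} c_k(t) = 1. For i = 1, 2 let y_i > 0 and let ψ_i : [0, y_i) → (0,1) be continuously differentiable with ψ_i'(t) = ψ_i(t)(1 − X(t, ψ_i(t))) for all t ∈ [0, y_i), and suppose ψ_i(t) → 1 as t ↑ y_i. If y_1 < y_2, then ψ_2(0) < ψ_1(0). -/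
/-!
If `ψ₁ 0 ≤ ψ₂ 0`, then `ψ₁ ≤ ψ₂` on all of `[0, y₁)`, so `ψ₂ y₁ ≥ lim_{t ↑ y₁} ψ₁ t = 1`,
contradicting `ψ₂ y₁ < 1`. The comparison needs no Lipschitz bound: along a solution of
`ψ' = ψ (1 - X(t, ψ))` we have `(log ψ)' = 1 - X(t, ψ)`, and this right-hand side is
antitone in `ψ` because a probability generating function has nonnegative coefficients.
-/

open Set Filter Topology Real

lemma monotoneOn_of_hasSum_mul_pow {a : ℕ → ℝ} {F : ℝ → ℝ} {s : Set ℝ} (hs : s ⊆ Ici 0)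
    (ha : ∀ k, 0 ≤ a k) (hF : ∀ z ∈ s, HasSum (fun k => a k * z ^ (k + 1)) (F z)) :
    MonotoneOn F s := fun x hx y hy hxy =>
  hasSum_le (fun k => mul_le_mul_of_nonneg_left (pow_le_pow_left₀ (hs hx) hxy _) (ha k))
    (hF x hx) (hF y hy)

lemma le_of_hasDerivWithinAt_mul_of_antitoneOn {h : ℝ → ℝ → ℝ} {S : Set ℝ} {ψ φ : ℝ → ℝ}
    {a b : ℝ} (hS : S ⊆ Ioi 0) (hh : ∀ x ∈ Ico a b, AntitoneOn (h x) S)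
    (hψ : ContinuousOn ψ (Icc a b)) (hφ : ContinuousOn φ (Icc a b))
    (hψS : MapsTo ψ (Icc a b) S) (hφS : MapsTo φ (Icc a b) S)
    (hψ' : ∀ x ∈ Ico a b, HasDerivWithinAt ψ (ψ x * h x (ψ x)) (Ici x) x)
    (hφ' : ∀ x ∈ Ico a b, HasDerivWithinAt φ (φ x * h x (φ x)) (Ici x) x)
    (hle : ψ a ≤ φ a) : ∀ t ∈ Icc a b, ψ t ≤ φ t := by
  have pos : ∀ {f : ℝ → ℝ}, MapsTo f (Icc a b) S → ∀ x ∈ Icc a b, 0 < f x :=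
    fun hf x hx => hS (hf hx)
  have hlog : ∀ {f : ℝ → ℝ}, MapsTo f (Icc a b) S →
      (∀ x ∈ Ico a b, HasDerivWithinAt f (f x * h x (f x)) (Ici x) x) →
      ∀ x ∈ Ico a b, HasDerivWithinAt (fun y => log (f y)) (h x (f x)) (Ici x) x :=
    fun hfS hf' x hx => ((hf' x hx).log (pos hfS x (Ico_subset_Icc_self hx)).ne').congr_deriv
      (mul_div_cancel_left₀ _ (pos hfS x (Ico_subset_Icc_self hx)).ne')
  intro t ht
  -- `log ψ` cannot cross the fence `log φ + ε (x - a)`: at a contact point `ψ ≥ φ`, hence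
  -- `(log ψ)' = h(x, ψ) ≤ h(x, φ) < (log φ)' + ε`.
  have fence : ∀ ε > 0, log (ψ t) ≤ log (φ t) + ε * (t - a) := by
    intro ε hε
    refine image_le_of_deriv_right_lt_deriv_boundary'
      (hψ.log fun x hx => (pos hψS x hx).ne') (hlog hψS hψ')
      (B := fun x => log (φ x) + ε * (x - a)) (B' := fun x => h x (φ x) + ε * 1)
      (by simpa using log_le_log (pos hψS a (left_mem_Icc.2 (ht.1.trans ht.2))) hle)
      ((hφ.log fun x hx => (pos hφS x hx).ne').add (by fun_prop))
      (fun x hx => (hlog hφS hφ' x hx).add (((hasDerivWithinAt_id _ _).sub_const a).const_mul ε))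
      (fun x hx hcontact => ?_) ht
    have hx' := Ico_subset_Icc_self hx
    have hφψ : φ x ≤ ψ x := by
      rw [← log_le_log_iff (pos hφS x hx') (pos hψS x hx'), hcontact]
      nlinarith [hx.1]
    linarith [hh x hx (hφS hx') (hψS hx') hφψ]
  have hlim : Tendsto (fun ε => log (φ t) + ε * (t - a)) (𝓝[>] 0) (𝓝 (log (φ t))) := by
    have hcont : Continuous fun ε => log (φ t) + ε * (t - a) := by fun_prop
    simpa using (hcont.tendsto 0).mono_left nhdsWithin_le_nhds
  exact (log_le_log_iff (pos hψS t ht) (pos hφS t ht)).1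
    (ge_of_tendsto hlim (eventually_nhdsWithin_of_forall fence))

lemma HasDerivWithinAt.Ici_of_Ico {f : ℝ → ℝ} {f' a b x : ℝ}
    (hf : HasDerivWithinAt f f' (Ico a b) x) (hx : x ∈ Ico a b) :
    HasDerivWithinAt f f' (Ici x) x :=
  hf.mono_of_mem_nhdsWithin (mem_of_superset (Ico_mem_nhdsGE hx.2) (Ico_subset_Ico_left hx.1))

theorem stmt12_general (X : ℝ → ℝ → ℝ) (c : ℝ → ℕ → ℝ)
    (hc : ∀ t : ℝ, 0 ≤ t → ∀ k : ℕ, 0 ≤ c t (k + 1))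
    (hX : ∀ t : ℝ, 0 ≤ t → ∀ z ∈ Set.Icc (0 : ℝ) 1,
      HasSum (fun k => c t (k + 1) * z ^ (k + 1)) (X t z))
    (y₁ y₂ : ℝ) (hy₁ : 0 < y₁) (ψ₁ ψ₂ : ℝ → ℝ)
    (hr₁ : ∀ t ∈ Set.Ico (0 : ℝ) y₁, ψ₁ t ∈ Set.Ioo (0 : ℝ) 1)
    (hd₁ : ∀ t ∈ Set.Ico (0 : ℝ) y₁,
      HasDerivWithinAt ψ₁ (ψ₁ t * (1 - X t (ψ₁ t))) (Set.Ico 0 y₁) t)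
    (hl₁ : Filter.Tendsto ψ₁ (nhdsWithin y₁ (Set.Iio y₁)) (nhds 1))
    (hr₂ : ∀ t ∈ Set.Ico (0 : ℝ) y₂, ψ₂ t ∈ Set.Ioo (0 : ℝ) 1)
    (hd₂ : ∀ t ∈ Set.Ico (0 : ℝ) y₂,
      HasDerivWithinAt ψ₂ (ψ₂ t * (1 - X t (ψ₂ t))) (Set.Ico 0 y₂) t)
    (hlt : y₁ < y₂) : ψ₂ 0 < ψ₁ 0 := by
  by_contra! h₀
  have hanti : ∀ t ∈ Ici (0 : ℝ), AntitoneOn (fun z => 1 - X t z) (Ioo 0 1) :=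
    fun t ht x hx y hy hxy => sub_le_sub_left (monotoneOn_of_hasSum_mul_pow (fun _ hz => hz.1)
      (hc t ht) (hX t ht) (Ioo_subset_Icc_self hx) (Ioo_subset_Icc_self hy) hxy) 1
  have hsub : Ico 0 y₁ ⊆ Ico 0 y₂ := Ico_subset_Ico_right hlt.le
  have hcomp : ∀ s ∈ Ico 0 y₁, ψ₁ s ≤ ψ₂ s := by
    intro s hs
    have h₁ : Icc 0 s ⊆ Ico 0 y₁ := Icc_subset_Ico_right hs.2
    have h₂ := h₁.trans hsub
    have k₁ := Ico_subset_Icc_self.trans h₁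
    have k₂ := Ico_subset_Icc_self.trans h₂
    refine le_of_hasDerivWithinAt_mul_of_antitoneOn (fun _ hz => hz.1)
      (fun x hx => hanti x hx.1) (fun x hx => (hd₁ x (h₁ hx)).continuousWithinAt.mono h₁)
      (fun x hx => (hd₂ x (h₂ hx)).continuousWithinAt.mono h₂)
      (fun x hx => hr₁ x (h₁ hx)) (fun x hx => hr₂ x (h₂ hx))
      (fun x hx => (hd₁ x (k₁ hx)).Ici_of_Ico (k₁ hx))
      (fun x hx => (hd₂ x (k₂ hx)).Ici_of_Ico (k₂ hx)) h₀ s ⟨hs.1, le_rfl⟩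
  have hy₁₂ : y₁ ∈ Ico 0 y₂ := ⟨hy₁.le, hlt⟩
  have hψ₂ : Tendsto ψ₂ (𝓝[<] y₁) (𝓝 (ψ₂ y₁)) := by
    rw [← nhdsWithin_Ioo_eq_nhdsLT hy₁]
    exact ((hd₂ y₁ hy₁₂).continuousWithinAt.mono (Ioo_subset_Ico_self.trans hsub)).tendsto
  have hone : 1 ≤ ψ₂ y₁ := le_of_tendsto_of_tendsto hl₁ hψ₂ <| by
    filter_upwards [Ioo_mem_nhdsLT hy₁] with t ht using hcomp t ⟨ht.1.le, ht.2⟩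
  exact (hr₂ y₁ hy₁₂).2.not_ge hone

theorem stmt12 (X : ℝ → ℝ → ℝ) (c : ℝ → ℕ → ℝ)
    (hXc : ContinuousOn (fun p : ℝ × ℝ => X p.1 p.2) (Set.Ici 0 ×ˢ Set.Icc 0 1))
    (hc : ∀ t : ℝ, 0 ≤ t → ∀ k : ℕ, 0 ≤ c t (k + 1))
    (hcs : ∀ t : ℝ, 0 ≤ t → HasSum (fun k => c t (k + 1)) 1)
    (hX : ∀ t : ℝ, 0 ≤ t → ∀ z ∈ Set.Icc (0 : ℝ) 1,
      HasSum (fun k => c t (k + 1) * z ^ (k + 1)) (X t z))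
    (y₁ y₂ : ℝ) (hy₁ : 0 < y₁) (hy₂ : 0 < y₂) (ψ₁ ψ₂ : ℝ → ℝ)
    (hr₁ : ∀ t ∈ Set.Ico (0 : ℝ) y₁, ψ₁ t ∈ Set.Ioo (0 : ℝ) 1)
    (hd₁ : ∀ t ∈ Set.Ico (0 : ℝ) y₁,
      HasDerivWithinAt ψ₁ (ψ₁ t * (1 - X t (ψ₁ t))) (Set.Ico 0 y₁) t)
    (hl₁ : Filter.Tendsto ψ₁ (nhdsWithin y₁ (Set.Iio y₁)) (nhds 1))
    (hr₂ : ∀ t ∈ Set.Ico (0 : ℝ) y₂, ψ₂ t ∈ Set.Ioo (0 : ℝ) 1)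
    (hd₂ : ∀ t ∈ Set.Ico (0 : ℝ) y₂,
      HasDerivWithinAt ψ₂ (ψ₂ t * (1 - X t (ψ₂ t))) (Set.Ico 0 y₂) t)
    (hl₂ : Filter.Tendsto ψ₂ (nhdsWithin y₂ (Set.Iio y₂)) (nhds 1))
    (hlt : y₁ < y₂) : ψ₂ 0 < ψ₁ 0 :=
  stmt12_general X c hc hX y₁ y₂ hy₁ ψ₁ ψ₂ hr₁ hd₁ hl₁ hr₂ hd₂ hlt
end

section
/- Let v_k : [0,∞) → [0,∞), for integers k ≥ 1, with ∑_{k ≥ 1} v_k(t) = 1 for every t ≥ 0, and set X(t,z) = ∑_{k ≥ 1} v_k(t) z^k. Let φ : [0,∞) → [0,∞) be locally integrable, and suppose that for every z ∈ (0,1) the function t ↦ X(t,z) is absolutely continuous with ∂_t X(t,z) = z · ∂_z X(t,z) · (X(t,z) − 1) + z · φ(t) for almost every t. Then for every t ≥ 0: ∑_{k ≥ 1} v_k(t)/k = ∑_{k ≥ 1} v_k(0)/k + ∫_0^t (φ(s) − 1/2) ds. -/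
/-!
Since `X(t,z)/z = ∑ v_k(t) z^(k-1)`, the quantity `∑ v_k(t)/k` is `∫_0^1 X(t,z)/z dz`.
Dividing the integrated equation by `z` gives
`X(t,z)/z - X(0,z)/z = ∫_0^t φ - ∫_0^t ∂_z X (1 - X) ds`, and for every `s` the `z`-integral of
`∂_z X (1 - X) = ∂_z (X - X²/2)` equals `1/2` because `X(s,0) = 0` and `X(s,1) = 1`. Integrating
over `z` and exchanging the order of integration gives the claim; the exchange is justified by
Tonelli, as `X(s,·)` is increasing and bounded by `1`, and by the joint measurability of
`∂_z X`, a limit of difference quotients of `X`, which is continuous in each variable separately.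
-/

open MeasureTheory Set Filter Topology

/-- `f` is, on `[0, 1]`, the generating function `z ↦ ∑ a k z^(k+1)` of a probability law on the
positive integers, `a k` being the mass of `k + 1`. -/
structure IsProbGenFun (a : ℕ → ℝ) (f : ℝ → ℝ) : Prop where
  nonneg : ∀ k, 0 ≤ a k
  hasSum_one : HasSum a 1
  hasSum : ∀ z ∈ Icc (0 : ℝ) 1, HasSum (fun k => a k * z ^ (k + 1)) (f z)

lemma HasDerivAt.sub_sq_div_two {f : ℝ → ℝ} {f' x : ℝ} (hf : HasDerivAt f f' x) :
    HasDerivAt (fun y => f y - f y ^ 2 / 2) (f' * (1 - f x)) x := by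
  refine (hf.fun_sub ((hf.fun_pow 2).div_const 2)).congr_deriv ?_
  norm_num
  ring

namespace IsProbGenFun

variable {a : ℕ → ℝ} {f : ℝ → ℝ}

lemma map_zero (hf : IsProbGenFun a f) : f 0 = 0 :=
  (hf.hasSum 0 (left_mem_Icc.2 zero_le_one)).unique (by simp)

lemma map_one (hf : IsProbGenFun a f) : f 1 = 1 :=
  (hf.hasSum 1 (right_mem_Icc.2 zero_le_one)).unique (by simpa using hf.hasSum_one)

lemma monotoneOn (hf : IsProbGenFun a f) : MonotoneOn f (Icc 0 1) := fun z hz w hw hzw =>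
  hasSum_le (fun k => mul_le_mul_of_nonneg_left (pow_le_pow_left₀ hz.1 hzw _) (hf.nonneg k))
    (hf.hasSum z hz) (hf.hasSum w hw)

lemma le_self (hf : IsProbGenFun a f) {z : ℝ} (hz : z ∈ Icc (0 : ℝ) 1) : f z ≤ z := by
  refine hasSum_le (fun k => ?_) (hf.hasSum z hz) (by simpa using hf.hasSum_one.mul_right z)
  exact mul_le_mul_of_nonneg_left (pow_le_of_le_one hz.1 hz.2 k.succ_ne_zero) (hf.nonneg k)

lemma continuousOn (hf : IsProbGenFun a f) : ContinuousOn f (Icc 0 1) := by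
  refine (continuousOn_tsum (f := fun k z => a k * z ^ (k + 1)) (fun k => by fun_prop)
    hf.hasSum_one.summable fun k z hz => ?_).congr fun z hz => (hf.hasSum z hz).tsum_eq.symm
  rw [norm_mul, Real.norm_of_nonneg (hf.nonneg k), norm_pow, Real.norm_of_nonneg hz.1]
  exact mul_le_of_le_one_right (hf.nonneg k) (pow_le_one₀ hz.1 hz.2)

lemma div_self_eq_tsum (hf : IsProbGenFun a f) {z : ℝ} (hz : z ∈ Ioc (0 : ℝ) 1) :
    f z / z = ∑' k, a k * z ^ k := by
  rw [← (hf.hasSum z (Ioc_subset_Icc_self hz)).tsum_eq, ← tsum_div_const]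
  exact tsum_congr fun k => by field_simp [hz.1.ne']; ring

lemma integrableOn_div_self (hf : IsProbGenFun a f) :
    IntegrableOn (fun z => f z / z) (Ioo 0 1) := by
  refine IntegrableOn.of_bound (by simp)
    (((hf.continuousOn.mono Ioo_subset_Icc_self).div continuousOn_id fun z hz => hz.1.ne')
      |>.aestronglyMeasurable measurableSet_Ioo) 1 ?_
  filter_upwards [ae_restrict_mem measurableSet_Ioo] with z hz
  have hz' := Ioo_subset_Icc_self hz
  have h0 : 0 ≤ f z := hf.map_zero ▸ hf.monotoneOn (left_mem_Icc.2 zero_le_one) hz' hz.1.le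
  rw [Real.norm_of_nonneg (div_nonneg h0 hz.1.le), div_le_one hz.1]
  exact hf.le_self hz'

lemma integral_div_self (hf : IsProbGenFun a f) :
    ∫ z in Ioo 0 1, f z / z = ∑' k, a k / (k + 1) := by
  have hpow (k : ℕ) : ∫ z in Ioo (0 : ℝ) 1, z ^ k = 1 / (k + 1) := by
    rw [integral_Ioc_eq_integral_Ioo.symm, ← intervalIntegral.integral_of_le zero_le_one,
      integral_pow]
    simp
  have hterm (k : ℕ) : ∫ z in Ioo (0 : ℝ) 1, a k * z ^ k = a k / (k + 1) := by
    rw [integral_const_mul, hpow, mul_one_div]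
  have hnorm (k : ℕ) : ∫ z in Ioo (0 : ℝ) 1, ‖a k * z ^ k‖ = a k / (k + 1) := by
    rw [← hterm]
    refine setIntegral_congr_fun measurableSet_Ioo fun z hz => ?_
    exact Real.norm_of_nonneg (mul_nonneg (hf.nonneg k) (pow_nonneg hz.1.le k))
  have hsummable : Summable fun k : ℕ => a k / (k + 1) :=
    hf.hasSum_one.summable.of_nonneg_of_le (fun k => by have := hf.nonneg k; positivity)
      fun k => div_le_self (hf.nonneg k) (by linarith [k.cast_nonneg (α := ℝ)])
  rw [setIntegral_congr_fun measurableSet_Ioo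
      fun z hz => hf.div_self_eq_tsum (Ioo_subset_Ioc_self hz),
    ← integral_tsum_of_summable_integral_norm (F := fun k z => a k * z ^ k)
      (fun k => (by fun_prop : Continuous _).integrableOn_Icc.mono_set Ioo_subset_Icc_self)
      (by simpa only [hnorm] using hsummable)]
  exact tsum_congr hterm

lemma deriv_nonneg (hf : IsProbGenFun a f) {f' z : ℝ} (hz : z ∈ Ioo (0 : ℝ) 1)
    (hd : HasDerivAt f f' z) : 0 ≤ f' := by
  refine hd.hasDerivWithinAt.nonneg_of_monotoneOn ?_ (hf.monotoneOn.mono Ioo_subset_Icc_self)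
  rw [accPt_iff_nhds]
  intro U hU
  obtain ⟨y, hyz, hyU⟩ := Filter.nonempty_of_mem
    (inter_mem_nhdsWithin {z}ᶜ (inter_mem hU (Ioo_mem_nhds hz.1 hz.2)))
  exact ⟨y, hyU, hyz⟩

lemma deriv_mul_one_sub_nonneg (hf : IsProbGenFun a f) {f' z : ℝ} (hz : z ∈ Ioo (0 : ℝ) 1)
    (hd : HasDerivAt f f' z) : 0 ≤ f' * (1 - f z) :=
  mul_nonneg (hf.deriv_nonneg hz hd) (by linarith [hf.le_self (Ioo_subset_Icc_self hz), hz.2])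

lemma integral_deriv_mul_one_sub (hf : IsProbGenFun a f) {f' : ℝ → ℝ}
    (hd : ∀ z ∈ Ioo (0 : ℝ) 1, HasDerivAt f (f' z) z) :
    IntegrableOn (fun z => f' z * (1 - f z)) (Ioo 0 1) ∧
      ∫ z in Ioo 0 1, f' z * (1 - f z) = 1 / 2 := by
  have hcont : ContinuousOn (fun z => f z - f z ^ 2 / 2) (Icc 0 1) := by
    have := hf.continuousOn; fun_prop
  have hderiv : ∀ z ∈ Ioo (0 : ℝ) 1,
      HasDerivAt (fun z => f z - f z ^ 2 / 2) (f' z * (1 - f z)) z :=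
    fun z hz => (hd z hz).sub_sq_div_two
  have hint := intervalIntegral.integrableOn_deriv_of_nonneg hcont hderiv
    fun z hz => hf.deriv_mul_one_sub_nonneg hz (hd z hz)
  refine ⟨hint.mono_set Ioo_subset_Ioc_self, ?_⟩
  rw [← integral_Ioc_eq_integral_Ioo, ← intervalIntegral.integral_of_le zero_le_one,
    intervalIntegral.integral_eq_sub_of_hasDerivAt_of_le zero_le_one hcont hderiv
      ((intervalIntegrable_iff_integrableOn_Ioc_of_le zero_le_one).2 hint),
    hf.map_zero, hf.map_one]
  norm_num

end IsProbGenFun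

lemma continuousOn_Ici_of_eq_add_integral {f g : ℝ → ℝ} {c : ℝ}
    (hg : ∀ t, 0 ≤ t → IntervalIntegrable g volume 0 t)
    (hf : ∀ t, 0 ≤ t → f t = c + ∫ s in (0 : ℝ)..t, g s) :
    ContinuousOn f (Ici 0) := by
  intro t₀ ht₀
  have hT : (0 : ℝ) ≤ t₀ + 1 := by linarith [mem_Ici.1 ht₀]
  have hprim : ContinuousOn (fun t => c + ∫ s in (0 : ℝ)..t, g s) (Icc 0 (t₀ + 1)) := by
    rw [← uIcc_of_le hT]
    exact continuousOn_const.add (intervalIntegral.continuousOn_primitive_interval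
      (by rw [uIcc_of_le hT]; exact (intervalIntegrable_iff_integrableOn_Icc_of_le hT).1 (hg _ hT)))
  have hnhds : Icc 0 (t₀ + 1) ∈ 𝓝[Ici 0] t₀ := by
    simpa only [Ici_inter_Iic] using inter_mem_nhdsWithin (Ici 0) (Iic_mem_nhds (lt_add_one t₀))
  exact ((hprim.congr fun t ht => hf t ht.1).continuousWithinAt
    ⟨ht₀, by linarith⟩).mono_of_mem_nhdsWithin hnhds

lemma measurable_clamp_of_continuousOn {X : ℝ → ℝ → ℝ}
    (hz : ∀ s, 0 ≤ s → ContinuousOn (X s) (Icc 0 1))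
    (hs : ∀ z ∈ Icc (0 : ℝ) 1, ContinuousOn (X · z) (Ici 0)) :
    Measurable fun p : ℝ × ℝ => X (max p.2 0) (max 0 (min p.1 1)) := by
  have hclamp (z : ℝ) : max 0 (min z 1) ∈ Icc (0 : ℝ) 1 :=
    ⟨le_max_left _ _, max_le zero_le_one (min_le_right _ _)⟩
  have hcont₁ : Continuous fun z : ℝ => max 0 (min z 1) := by fun_prop
  have hcont₂ : Continuous fun s : ℝ => max s 0 := by fun_prop
  exact measurable_uncurry_of_continuous_of_measurable
    (u := fun z s => X (max s 0) (max 0 (min z 1)))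
    (fun s => (hz _ (le_max_right s 0)).comp_continuous hcont₁ hclamp)
    fun z => ((hs _ (hclamp z)).comp_continuous hcont₂ fun s => le_max_right s 0).measurable

lemma aemeasurable_of_hasDerivAt_fst {β : Type*} [MeasurableSpace β] {J D : ℝ × β → ℝ}
    (hJ : Measurable J) {μ : Measure (ℝ × β)}
    (hD : ∀ᵐ p ∂μ, HasDerivAt (fun z => J (z, p.2)) (D p) p.1) : AEMeasurable D μ := by
  have hshift (n : ℕ) : Measurable fun p : ℝ × β => J (p.1 + 1 / (n + 1), p.2) :=
    hJ.comp ((measurable_fst.add_const _).prodMk measurable_snd)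
  refine aemeasurable_of_tendsto_metrizable_ae atTop
    (f := fun (n : ℕ) p => ((n : ℝ) + 1) * (J (p.1 + 1 / ((n : ℝ) + 1), p.2) - J p))
    (fun n => (measurable_const.mul ((hshift n).sub hJ)).aemeasurable) ?_
  filter_upwards [hD] with p hp
  have hstep : Tendsto (fun n : ℕ => p.1 + 1 / ((n : ℝ) + 1)) atTop (𝓝[≠] p.1) := by
    refine tendsto_nhdsWithin_iff.2 ⟨?_, Eventually.of_forall fun n => ?_⟩
    · simpa using (tendsto_const_nhds (x := p.1)).add tendsto_one_div_add_atTop_nhds_zero_nat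
    · simp only [mem_compl_iff, mem_singleton_iff, add_eq_left]
      positivity
  refine ((hasDerivAt_iff_tendsto_slope.1 hp).comp hstep).congr fun n => ?_
  have hn : (n : ℝ) + 1 ≠ 0 := by positivity
  simp only [Function.comp_apply, slope_def_field, add_sub_cancel_left]
  field_simp

lemma integrable_prod_of_nonneg_of_integral_eq {α β : Type*} [MeasurableSpace α]
    [MeasurableSpace β] {μ : Measure α} {ν : Measure β} [SFinite μ] [IsFiniteMeasure ν]
    {G : α → β → ℝ} {c : ℝ} (hG : AEStronglyMeasurable (Function.uncurry G) (μ.prod ν))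
    (hnn : ∀ᵐ y ∂ν, 0 ≤ᵐ[μ] fun x => G x y) (hint : ∀ᵐ y ∂ν, Integrable (fun x => G x y) μ)
    (hc : ∀ᵐ y ∂ν, ∫ x, G x y ∂μ = c) :
    Integrable (Function.uncurry G) (μ.prod ν) := by
  refine (integrable_prod_iff' hG).2 ⟨hint, (integrable_const c).congr ?_⟩
  filter_upwards [hnn, hc] with y hy hyc
  rw [← hyc]
  exact integral_congr_ae (hy.mono fun x hx => (Real.norm_of_nonneg hx).symm)

lemma integral_integral_swap_of_integral_eq {α β : Type*} [MeasurableSpace α]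
    [MeasurableSpace β] {μ : Measure α} {ν : Measure β} [SFinite μ] [SFinite ν]
    {G : α → β → ℝ} {c : ℝ} (hG : Integrable (Function.uncurry G) (μ.prod ν))
    (hc : ∀ᵐ y ∂ν, ∫ x, G x y ∂μ = c) :
    ∫ x, ∫ y, G x y ∂ν ∂μ = ν.real univ * c := by
  rw [integral_integral_swap hG, integral_congr_ae hc, integral_const, smul_eq_mul]

lemma aestronglyMeasurable_deriv_mul_one_sub {X Xz : ℝ → ℝ → ℝ} {T : Set ℝ}
    (hT : MeasurableSet T) (hT₀ : T ⊆ Ici 0)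
    (hz : ∀ s, 0 ≤ s → ContinuousOn (X s) (Icc 0 1))
    (hs : ∀ z ∈ Icc (0 : ℝ) 1, ContinuousOn (X · z) (Ici 0))
    (hd : ∀ s, 0 ≤ s → ∀ z ∈ Ioo (0 : ℝ) 1, HasDerivAt (X s) (Xz s z) z) :
    AEStronglyMeasurable (fun p : ℝ × ℝ => Xz p.2 p.1 * (1 - X p.2 p.1))
      ((volume.restrict (Ioo 0 1)).prod (volume.restrict T)) := by
  set J : ℝ × ℝ → ℝ := fun p => X (max p.2 0) (max 0 (min p.1 1))
  have hJ : Measurable J := measurable_clamp_of_continuousOn hz hs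
  refine (aemeasurable_of_hasDerivAt_fst (J := fun p => J p - J p ^ 2 / 2)
    (by fun_prop) ?_).aestronglyMeasurable
  rw [Measure.prod_restrict]
  refine ae_restrict_of_forall_mem (measurableSet_Ioo.prod hT) ?_
  rintro ⟨z, s⟩ ⟨hz, hsT⟩
  have hs₀ : 0 ≤ s := hT₀ hsT
  refine (hd s hs₀ z hz).sub_sq_div_two.congr_of_eventuallyEq ?_
  filter_upwards [Ioo_mem_nhds hz.1 hz.2] with w hw
  simp only [J, max_eq_left hs₀, min_eq_left hw.2.le, max_eq_right hw.1.le]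

lemma continuousOn_Ici_apply_of_eq_add_integral {a : ℝ → ℕ → ℝ} {X g : ℝ → ℝ → ℝ}
    (hX : ∀ s, 0 ≤ s → IsProbGenFun (a s) (X s))
    (hg : ∀ z ∈ Ioo (0 : ℝ) 1, ∀ t, 0 ≤ t → IntervalIntegrable (g z) volume 0 t)
    (hAC : ∀ z ∈ Ioo (0 : ℝ) 1, ∀ t, 0 ≤ t → X t z = X 0 z + ∫ s in (0 : ℝ)..t, g z s) :
    ∀ z ∈ Icc (0 : ℝ) 1, ContinuousOn (X · z) (Ici 0) := by
  intro z hz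
  rcases eq_or_lt_of_le hz.1 with rfl | hz₀
  · exact continuousOn_const.congr fun s hs => (hX s hs).map_zero
  rcases eq_or_lt_of_le hz.2 with rfl | hz₁
  · exact continuousOn_const.congr fun s hs => (hX s hs).map_one
  exact continuousOn_Ici_of_eq_add_integral (hg z ⟨hz₀, hz₁⟩) (hAC z ⟨hz₀, hz₁⟩)

lemma div_eq_of_eq_add_integral {x x' φ : ℝ → ℝ} {z t : ℝ} (hz : z ≠ 0) (ht : 0 ≤ t)
    (hφ : IntervalIntegrable φ volume 0 t)
    (hint : IntervalIntegrable (fun s => z * x' s * (x s - 1) + z * φ s) volume 0 t)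
    (hx : x t = x 0 + ∫ s in (0 : ℝ)..t, (z * x' s * (x s - 1) + z * φ s)) :
    x t / z = x 0 / z + ((∫ s in (0 : ℝ)..t, φ s) - ∫ s in Ioc 0 t, x' s * (1 - x s)) := by
  have hdiff : IntervalIntegrable (fun s => φ s - x' s * (1 - x s)) volume 0 t := by
    convert hint.const_mul z⁻¹ using 1
    ext s
    field_simp
    ring
  have hrhs : ∫ s in (0 : ℝ)..t, (z * x' s * (x s - 1) + z * φ s) =
      z * ∫ s in (0 : ℝ)..t, (φ s - x' s * (1 - x s)) := by
    rw [← intervalIntegral.integral_const_mul]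
    congr with s
    ring
  rw [hx, hrhs, intervalIntegral.integral_sub hφ (by simpa using hφ.sub hdiff),
    intervalIntegral.integral_of_le ht (f := fun s => x' s * (1 - x s))]
  field_simp

lemma integral_integral_deriv_mul_one_sub {a : ℝ → ℕ → ℝ} {X Xz : ℝ → ℝ → ℝ} {t : ℝ}
    (hX : ∀ s, 0 ≤ s → IsProbGenFun (a s) (X s))
    (hcont : ∀ z ∈ Icc (0 : ℝ) 1, ContinuousOn (X · z) (Ici 0))
    (hd : ∀ s, 0 ≤ s → ∀ z ∈ Ioo (0 : ℝ) 1, HasDerivAt (X s) (Xz s z) z) (ht : 0 ≤ t) :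
    IntegrableOn (fun z => ∫ s in Ioc 0 t, Xz s z * (1 - X s z)) (Ioo 0 1) ∧
      ∫ z in Ioo 0 1, ∫ s in Ioc 0 t, Xz s z * (1 - X s z) = t / 2 := by
  set G : ℝ → ℝ → ℝ := fun z s => Xz s z * (1 - X s z)
  have : IsFiniteMeasure (volume.restrict (Ioc 0 t)) := isFiniteMeasure_restrict.2 (by simp)
  have hinner : ∀ᵐ s ∂volume.restrict (Ioc 0 t),
      IntegrableOn (G · s) (Ioo 0 1) ∧ ∫ z in Ioo 0 1, G z s = 1 / 2 :=
    ae_restrict_of_forall_mem measurableSet_Ioc fun s hs =>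
      (hX s hs.1.le).integral_deriv_mul_one_sub (hd s hs.1.le)
  have hnn : ∀ᵐ s ∂volume.restrict (Ioc 0 t), 0 ≤ᵐ[volume.restrict (Ioo 0 1)] (G · s) :=
    ae_restrict_of_forall_mem measurableSet_Ioc fun s hs =>
      ae_restrict_of_forall_mem measurableSet_Ioo fun z hz =>
        (hX s hs.1.le).deriv_mul_one_sub_nonneg hz (hd s hs.1.le z hz)
  have hG : Integrable (Function.uncurry G)
      ((volume.restrict (Ioo 0 1)).prod (volume.restrict (Ioc 0 t))) :=
    integrable_prod_of_nonneg_of_integral_eq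
      (aestronglyMeasurable_deriv_mul_one_sub measurableSet_Ioc (fun s hs => mem_Ici.2 hs.1.le)
        (fun s hs => (hX s hs).continuousOn) hcont hd)
      hnn (hinner.mono fun _ h => h.1) (hinner.mono fun _ h => h.2)
  refine ⟨hG.integral_prod_left, ?_⟩
  rw [integral_integral_swap_of_integral_eq hG (hinner.mono fun _ h => h.2)]
  simp [ht, div_eq_mul_inv]

theorem stmt14_general (v : ℕ → ℝ → ℝ) (φ : ℝ → ℝ) (X Xz : ℝ → ℝ → ℝ)
    (hnn : ∀ k : ℕ, ∀ t : ℝ, 0 ≤ t → 0 ≤ v (k + 1) t)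
    (hsum : ∀ t : ℝ, 0 ≤ t → HasSum (fun k => v (k + 1) t) 1)
    (hX : ∀ t : ℝ, 0 ≤ t → ∀ z ∈ Set.Icc (0 : ℝ) 1,
      HasSum (fun k => v (k + 1) t * z ^ (k + 1)) (X t z))
    (hφint : LocallyIntegrableOn φ (Set.Ici 0))
    (hXz : ∀ t : ℝ, 0 ≤ t → ∀ z ∈ Set.Ioo (0 : ℝ) 1,
      HasDerivWithinAt (fun w => X t w) (Xz t z) (Set.Ioo 0 1) z)
    (hint : ∀ z ∈ Set.Ioo (0 : ℝ) 1, ∀ t : ℝ, 0 ≤ t →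
      IntervalIntegrable (fun s => z * Xz s z * (X s z - 1) + z * φ s) volume 0 t)
    (hAC : ∀ z ∈ Set.Ioo (0 : ℝ) 1, ∀ t : ℝ, 0 ≤ t →
      X t z = X 0 z + ∫ s in (0 : ℝ)..t, (z * Xz s z * (X s z - 1) + z * φ s)) :
    ∀ t : ℝ, 0 ≤ t →
      ∑' k : ℕ, v (k + 1) t / ((k : ℝ) + 1) =
        (∑' k : ℕ, v (k + 1) 0 / ((k : ℝ) + 1)) + ∫ s in (0 : ℝ)..t, (φ s - 1 / 2) := by
  intro t ht
  have hpgf (s : ℝ) (hs : 0 ≤ s) : IsProbGenFun (fun k => v (k + 1) s) (X s) :=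
    ⟨fun k => hnn k s hs, hsum s hs, hX s hs⟩
  have hφ : IntervalIntegrable φ volume 0 t :=
    (intervalIntegrable_iff_integrableOn_Icc_of_le ht).2
      (hφint.integrableOn_compact_subset (fun _ hx => hx.1) isCompact_Icc)
  obtain ⟨hK, hKval⟩ := integral_integral_deriv_mul_one_sub hpgf
    (continuousOn_Ici_apply_of_eq_add_integral hpgf hint hAC)
    (fun s hs z hz => (hXz s hs z hz).hasDerivAt (Ioo_mem_nhds hz.1 hz.2)) ht
  calc ∑' k : ℕ, v (k + 1) t / ((k : ℝ) + 1)
      = ∫ z in Ioo 0 1, X t z / z := (hpgf t ht).integral_div_self.symm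
    _ = ∫ z in Ioo 0 1, (X 0 z / z +
          ((∫ s in (0 : ℝ)..t, φ s) - ∫ s in Ioc 0 t, Xz s z * (1 - X s z))) :=
        setIntegral_congr_fun measurableSet_Ioo fun z hz =>
          div_eq_of_eq_add_integral hz.1.ne' ht hφ (hint z hz t ht) (hAC z hz t ht)
    _ = (∫ z in Ioo 0 1, X 0 z / z) + ((∫ s in (0 : ℝ)..t, φ s) - t / 2) := by
        rw [integral_add (hpgf 0 le_rfl).integrableOn_div_self ((integrable_const _).sub' hK),
          integral_sub (integrable_const _) hK, hKval, setIntegral_const]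
        simp
    _ = _ := by
        rw [(hpgf 0 le_rfl).integral_div_self, intervalIntegral.integral_sub hφ
          intervalIntegrable_const, intervalIntegral.integral_const, smul_eq_mul, sub_zero]
        ring

theorem stmt14 (v : ℕ → ℝ → ℝ) (φ : ℝ → ℝ) (X Xz : ℝ → ℝ → ℝ)
    (hnn : ∀ k : ℕ, ∀ t : ℝ, 0 ≤ t → 0 ≤ v (k + 1) t)
    (hsum : ∀ t : ℝ, 0 ≤ t → HasSum (fun k => v (k + 1) t) 1)
    (hX : ∀ t : ℝ, 0 ≤ t → ∀ z ∈ Set.Icc (0 : ℝ) 1,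
      HasSum (fun k => v (k + 1) t * z ^ (k + 1)) (X t z))
    (hφnn : ∀ t : ℝ, 0 ≤ t → 0 ≤ φ t)
    (hφint : LocallyIntegrableOn φ (Set.Ici 0))
    (hXz : ∀ t : ℝ, 0 ≤ t → ∀ z ∈ Set.Ioo (0 : ℝ) 1,
      HasDerivWithinAt (fun w => X t w) (Xz t z) (Set.Ioo 0 1) z)
    (hint : ∀ z ∈ Set.Ioo (0 : ℝ) 1, ∀ t : ℝ, 0 ≤ t →
      IntervalIntegrable (fun s => z * Xz s z * (X s z - 1) + z * φ s) volume 0 t)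
    (hAC : ∀ z ∈ Set.Ioo (0 : ℝ) 1, ∀ t : ℝ, 0 ≤ t →
      X t z = X 0 z + ∫ s in (0 : ℝ)..t, (z * Xz s z * (X s z - 1) + z * φ s)) :
    ∀ t : ℝ, 0 ≤ t →
      ∑' k : ℕ, v (k + 1) t / ((k : ℝ) + 1) =
        (∑' k : ℕ, v (k + 1) 0 / ((k : ℝ) + 1)) + ∫ s in (0 : ℝ)..t, (φ s - 1 / 2) :=
  stmt14_general v φ X Xz hnn hsum hX hφint hXz hint hAC
end

section
/- Let y > 0, let φ : [0,y) → [0,∞), let ψ : [0,y) → (0,1] be nondecreasing, and let X : [0,y) × [0,1] → [0,1]. Suppose that for all 0 ≤ t ≤ s < y one has X(s, ψ(s)) = X(t, ψ(t)) + ∫_t^s ψ(u) φ(u) du, and that ∫_t^s φ(u) du ≥ (s − t)/2 − 1 for all 0 ≤ t ≤ s < y. Then for every t ∈ [0,y) with y − t > 2, the bound ψ(t) ≤ 1/((y − t)/2 − 1) holds. -/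
theorem stmt15 (y : ℝ) (hy : 0 < y) (φ ψ : ℝ → ℝ) (X : ℝ → ℝ → ℝ)
    (hφ : ∀ t ∈ Set.Ico (0 : ℝ) y, 0 ≤ φ t)
    (hψ : ∀ t ∈ Set.Ico (0 : ℝ) y, ψ t ∈ Set.Ioc (0 : ℝ) 1)
    (hmono : MonotoneOn ψ (Set.Ico 0 y))
    (hXr : ∀ t ∈ Set.Ico (0 : ℝ) y, ∀ z ∈ Set.Icc (0 : ℝ) 1, X t z ∈ Set.Icc (0 : ℝ) 1)
    (hevol : ∀ t s : ℝ, 0 ≤ t → t ≤ s → s < y →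
      X s (ψ s) = X t (ψ t) + ∫ u in t..s, ψ u * φ u)
    (hφlb : ∀ t s : ℝ, 0 ≤ t → t ≤ s → s < y →
      (s - t) / 2 - 1 ≤ ∫ u in t..s, φ u) :
    ∀ t ∈ Set.Ico (0 : ℝ) y, 2 < y - t → ψ t ≤ 1 / ((y - t) / 2 - 1) := by
  intro t ht h2
  obtain ⟨ht0, hty⟩ := ht
  have hψt := hψ t ⟨ht0, hty⟩
  have hψt0 : 0 < ψ t := hψt.1
  -- key bound for any s with s - t > 2
  have key : ∀ s, t ≤ s → s < y → 2 < s - t → ψ t * ((s - t) / 2 - 1) ≤ 1 := by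
    intro s hts hsy h2s
    have hIφ := hφlb t s ht0 hts hsy
    have hpos : (0 : ℝ) < (s - t) / 2 - 1 := by linarith
    -- φ is interval integrable on [t,s]
    have hφint : IntervalIntegrable φ MeasureTheory.volume t s := by
      by_contra h
      rw [intervalIntegral.integral_undef h] at hIφ
      linarith
    -- monotone extension of ψ
    set ψ' : ℝ → ℝ := fun u => ψ (max t (min u s)) with hψ'def
    have hmem : ∀ u : ℝ, max t (min u s) ∈ Set.Ico (0 : ℝ) y := by
      intro u
      constructor
      · exact le_trans ht0 (le_max_left _ _)
      · exact lt_of_le_of_lt (max_le hts (min_le_right _ _)) hsy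
    have hψ'mono : Monotone ψ' := by
      intro a b hab
      exact hmono (hmem a) (hmem b)
        (max_le_max le_rfl (min_le_min (by exact hab) le_rfl))
    have hψ'eq : ∀ u ∈ Set.Ioc t s, ψ' u = ψ u := by
      intro u hu
      simp only [hψ'def]
      rw [min_eq_left hu.2, max_eq_right hu.1.le]
    have hψ'bd : ∀ u : ℝ, 0 < ψ' u ∧ ψ' u ≤ 1 := fun u => hψ (max t (min u s)) (hmem u)
    -- ψ * φ is interval integrable on [t,s]
    have hprodint : IntervalIntegrable (fun u => ψ u * φ u) MeasureTheory.volume t s := by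
      rw [intervalIntegrable_iff_integrableOn_Ioc_of_le hts] at hφint ⊢
      have h1 : MeasureTheory.IntegrableOn (fun u => ψ' u * φ u) (Set.Ioc t s) := by
        apply MeasureTheory.Integrable.mono hφint
          ((hψ'mono.measurable.aestronglyMeasurable).mul hφint.aestronglyMeasurable)
        filter_upwards [MeasureTheory.ae_restrict_mem measurableSet_Ioc] with u hu
        have hφu : 0 ≤ φ u := hφ u ⟨le_trans ht0 hu.1.le, lt_of_le_of_lt hu.2 hsy⟩
        simp only [Pi.mul_apply, Real.norm_eq_abs]
        rw [abs_of_nonneg hφu, abs_of_nonneg (mul_nonneg (hψ'bd u).1.le hφu)]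
        nlinarith [(hψ'bd u).1, (hψ'bd u).2]
      apply h1.congr_fun (fun u hu => (hψ'eq u hu).symm ▸ rfl) measurableSet_Ioc
    -- compare integrals
    have hconstint : IntervalIntegrable (fun u => ψ t * φ u) MeasureTheory.volume t s :=
      hφint.const_mul _
    have hcmp : (∫ u in t..s, ψ t * φ u) ≤ ∫ u in t..s, ψ u * φ u := by
      apply intervalIntegral.integral_mono_on hts hconstint hprodint
      intro u hu
      have huIco : u ∈ Set.Ico (0 : ℝ) y := ⟨le_trans ht0 hu.1, lt_of_le_of_lt hu.2 hsy⟩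
      have hφu : 0 ≤ φ u := hφ u huIco
      have : ψ t ≤ ψ u := hmono ⟨ht0, hty⟩ huIco hu.1
      exact mul_le_mul_of_nonneg_right this hφu
    have hconst : (∫ u in t..s, ψ t * φ u) = ψ t * ∫ u in t..s, φ u :=
      intervalIntegral.integral_const_mul _ _
    -- X bounds
    have hψs := hψ s ⟨le_trans ht0 hts, hsy⟩
    have hXs := hXr s ⟨le_trans ht0 hts, hsy⟩ (ψ s) ⟨hψs.1.le, hψs.2⟩
    have hXt := hXr t ⟨ht0, hty⟩ (ψ t) ⟨hψt0.le, hψt.2⟩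
    have hev := hevol t s ht0 hts hsy
    have hint1 : (∫ u in t..s, ψ u * φ u) ≤ 1 := by
      have := hXs.2
      have := hXt.1
      linarith
    have : ψ t * ((s - t) / 2 - 1) ≤ ψ t * ∫ u in t..s, φ u :=
      mul_le_mul_of_nonneg_left hIφ hψt0.le
    linarith [hcmp, hconst ▸ hcmp]
  -- conclude by contradiction with an explicit s
  by_contra hcon
  push_neg at hcon
  have hc : (0 : ℝ) < (y - t) / 2 - 1 := by linarith
  have h1c : 1 / ψ t < (y - t) / 2 - 1 := by
    rw [div_lt_iff₀ hψt0]
    rw [div_lt_iff₀ hc] at hcon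
    nlinarith
  set s := (t + 2 + 2 / ψ t + y) / 2 with hs
  have hlt : t + 2 + 2 / ψ t < y := by
    have : 2 / ψ t = 2 * (1 / ψ t) := by ring
    nlinarith
  have hsy : s < y := by rw [hs]; linarith
  have h2s : 2 < s - t := by
    have : 0 < 2 / ψ t := by positivity
    rw [hs]; linarith
  have hts : t ≤ s := by linarith
  have hk := key s hts hsy h2s
  have hgt : 1 / ψ t < (s - t) / 2 - 1 := by
    rw [div_lt_iff₀ hψt0] at h1c ⊢
    rw [hs]
    have : 2 / ψ t * ψ t = 2 := by field_simp
    nlinarith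
  rw [div_lt_iff₀ hψt0] at hgt
  nlinarith
end

section
/- Let (Ω, 𝔉, ℙ) be a probability space, K a positive integer, and η > 0. Let x = (x_k)_{k ≥ 1} and x' = (x'_k)_{k ≥ 1} be random sequences with values in [0,1] satisfying ∑_{k ≥ 1} x_k = ∑_{k ≥ 1} x'_k = 1 almost surely, and let U be a random variable uniformly distributed on [0,1] and independent of (x, x'). Define random positive integers c and c' by ∑_{k=1}^{c} x_k ≤ U < ∑_{k=1}^{c+1} x_k and ∑_{k=1}^{c'} x'_k ≤ U < ∑_{k=1}^{c'+1} x'_k. If ℙ[∃ k ≤ K with |x_k − x'_k| ≥ η/K²] ≤ η/K and ∑_{k > K} x_k ≤ η almost surely, then ℙ[c = c'] ≥ 1 − 6η. -/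
open MeasureTheory ProbabilityTheory Finset

/-! Write `S j = x_1 + ⋯ + x_j` and `S' j` likewise, so that `c` is the index with
`S c ≤ U < S (c + 1)`. Outside the event that some `|x_k - x'_k|` with `k ≤ K` is at least
`δ = η / K²`, the partial sums satisfy `|S j - S' j| ≤ K δ = η / K` for `j ≤ K`. If then `c ≠ c'`,
either one of the indices exceeds `K`, which forces `U ≥ S K - η / K ≥ 1 - η - η / K`, or `U`
lies within `η / K` of one of the `K` points `S 1, …, S K`. Since `U` is uniform and independent of
`x`, these events have probability at most `η + η / K` and `K · 2η / K = 2η`, which with the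
`η / K` of the first event gives `P (c ≠ c') ≤ 5 η`. -/

def partialSum (y : ℕ → ℝ) (j : ℕ) : ℝ := ∑ k ∈ Icc 1 j, y k

lemma partialSum_mono {y : ℕ → ℝ} (hy : ∀ k, 1 ≤ k → 0 ≤ y k) : Monotone (partialSum y) :=
  fun _ _ hab => sum_le_sum_of_subset_of_nonneg (Icc_subset_Icc_right hab)
    fun k hk _ => hy k (mem_Icc.mp hk).1

lemma partialSum_eq_sum_range (y : ℕ → ℝ) (j : ℕ) :
    partialSum y j = ∑ k ∈ range j, y (k + 1) := by
  rw [partialSum, range_eq_Ico, sum_Ico_add' y, zero_add, Ico_add_one_right_eq_Icc]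

lemma HasSum.partialSum_add_tsum {y : ℕ → ℝ} {s : ℝ} (h : HasSum (fun k => y (k + 1)) s)
    (K : ℕ) : partialSum y K + ∑' k, y (K + 1 + k) = s := by
  rw [← h.tsum_eq, ← h.summable.sum_add_tsum_nat_add K, partialSum_eq_sum_range]
  congr 1
  exact tsum_congr fun k => by rw [add_right_comm, add_comm K]

lemma abs_partialSum_sub_le {y y' : ℕ → ℝ} {δ : ℝ} {j : ℕ}
    (h : ∀ k, 1 ≤ k → k ≤ j → |y k - y' k| ≤ δ) :
    |partialSum y j - partialSum y' j| ≤ j * δ := by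
  calc |partialSum y j - partialSum y' j| = |∑ k ∈ Icc 1 j, (y k - y' k)| := by
        rw [partialSum, partialSum, sum_sub_distrib]
    _ ≤ ∑ k ∈ Icc 1 j, |y k - y' k| := abs_sum_le_sum_abs _ _
    _ ≤ #(Icc 1 j) • δ :=
        sum_le_card_nsmul _ _ _ fun k hk => h k (mem_Icc.mp hk).1 (mem_Icc.mp hk).2
    _ = j * δ := by simp

lemma measurable_partialSum (j : ℕ) : Measurable fun y : ℕ → ℝ => partialSum y j :=
  Finset.measurable_sum _ fun k _ => measurable_pi_apply k

lemma sub_le_or_exists_abs_sub_partialSum_le_of_ne {y y' : ℕ → ℝ}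
    (hy : ∀ k, 1 ≤ k → 0 ≤ y k) (hy' : ∀ k, 1 ≤ k → 0 ≤ y' k) {K c c' : ℕ} {u ε : ℝ}
    (hclose : ∀ j ≤ K, |partialSum y j - partialSum y' j| ≤ ε)
    (hc : partialSum y c ≤ u ∧ u < partialSum y (c + 1))
    (hc' : partialSum y' c' ≤ u ∧ u < partialSum y' (c' + 1)) (hne : c ≠ c') :
    partialSum y K - ε ≤ u ∨ ∃ j ∈ Icc 1 K, |u - partialSum y j| ≤ ε := by
  have mono := partialSum_mono hy
  have mono' := partialSum_mono hy'
  have close : ∀ j ≤ K, partialSum y j - ε ≤ partialSum y' j ∧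
      partialSum y' j ≤ partialSum y j + ε := fun j hj => by
    constructor <;> linarith [abs_le.mp (hclose j hj)]
  have hε : 0 ≤ ε := (abs_nonneg _).trans (hclose K le_rfl)
  by_cases hcK : K < c
  · exact Or.inl (by linarith [mono hcK.le, hc.1])
  by_cases hc'K : K < c'
  · exact Or.inl (by linarith [mono' hc'K.le, hc'.1, close K le_rfl])
  right
  rcases hne.lt_or_gt with hlt | hgt
  · refine ⟨c + 1, mem_Icc.mpr ⟨by omega, by omega⟩, abs_le.mpr ⟨?_, ?_⟩⟩
    · linarith [mono' (show c + 1 ≤ c' by omega), hc'.1, close (c + 1) (by omega)]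
    · linarith [hc.2]
  · refine ⟨c' + 1, mem_Icc.mpr ⟨by omega, by omega⟩, abs_le.mpr ⟨?_, ?_⟩⟩
    · linarith [mono (show c' + 1 ≤ c by omega), hc.1]
    · linarith [hc'.2, close (c' + 1) (by omega)]

lemma paintbox_disagreement_cases {y y' : ℕ → ℝ}
    (hy : ∀ k, 1 ≤ k → 0 ≤ y k) (hy' : ∀ k, 1 ≤ k → 0 ≤ y' k)
    (hs : HasSum (fun k => y (k + 1)) 1) {K c c' : ℕ} {u η δ : ℝ} (hδ : 0 ≤ δ)
    (htail : ∑' k, y (K + 1 + k) ≤ η)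
    (hc : partialSum y c ≤ u ∧ u < partialSum y (c + 1))
    (hc' : partialSum y' c' ≤ u ∧ u < partialSum y' (c' + 1)) (hne : c ≠ c') :
    (∃ k, 1 ≤ k ∧ k ≤ K ∧ δ ≤ |y k - y' k|) ∨ 1 - (η + K * δ) ≤ u ∨
      ∃ j ∈ Icc 1 K, |u - partialSum y j| ≤ K * δ := by
  by_cases hfar : ∃ k, 1 ≤ k ∧ k ≤ K ∧ δ ≤ |y k - y' k|
  · exact Or.inl hfar
  push Not at hfar
  have hclose (j : ℕ) (hj : j ≤ K) : |partialSum y j - partialSum y' j| ≤ K * δ :=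
    (abs_partialSum_sub_le fun k hk hkj => (hfar k hk (hkj.trans hj)).le).trans (by gcongr)
  have hmass := hs.partialSum_add_tsum K
  refine Or.inr ((sub_le_or_exists_abs_sub_partialSum_le_of_ne hy hy' hclose hc hc' hne).imp
    (fun hu => ?_) id)
  linarith

section Probability

variable {Ω : Type*} [MeasurableSpace Ω] {P : Measure Ω} {U : Ω → ℝ}

lemma one_sub_le_measure_of_measure_compl_le [IsProbabilityMeasure P] {s : Set Ω} {p : ENNReal}
    (h : P sᶜ ≤ p) : 1 - p ≤ P s :=
  (tsub_le_tsub_left h 1).trans (tsub_le_iff_right.mpr (measure_univ (μ := P) ▸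
    measure_univ_le_add_compl s))

lemma measure_abs_sub_le_le_of_indepFun [IsProbabilityMeasure P] {Y : Ω → ℝ}
    (hUm : Measurable U) (hYm : Measurable Y)
    (hU : P.map U ≤ volume) (hind : IndepFun U Y P) (ε : ℝ) :
    P {ω | |U ω - Y ω| ≤ ε} ≤ ENNReal.ofReal (2 * ε) := by
  have hS : MeasurableSet {p : ℝ × ℝ | |p.1 - p.2| ≤ ε} :=
    measurableSet_le (by fun_prop) measurable_const
  have slice (y : ℝ) :
      (fun u => (u, y)) ⁻¹' {p : ℝ × ℝ | |p.1 - p.2| ≤ ε} = Set.Icc (y - ε) (y + ε) := by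
    ext u; simp only [Set.mem_preimage, Set.mem_ofPred_eq, Set.mem_Icc, abs_sub_le_iff]
    constructor <;> rintro ⟨h1, h2⟩ <;> constructor <;> linarith
  have : IsProbabilityMeasure (P.map Y) := Measure.isProbabilityMeasure_map hYm.aemeasurable
  calc P {ω | |U ω - Y ω| ≤ ε}
        = P.map (fun ω => (U ω, Y ω)) {p : ℝ × ℝ | |p.1 - p.2| ≤ ε} := by
        rw [Measure.map_apply (hUm.prodMk hYm) hS]; rfl
    _ = ∫⁻ y, P.map U (Set.Icc (y - ε) (y + ε)) ∂P.map Y := by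
        rw [(indepFun_iff_map_prod_eq_prod_map_map hUm.aemeasurable hYm.aemeasurable).mp hind,
          Measure.prod_apply_symm hS]
        simp only [slice]
    _ ≤ ∫⁻ _, ENNReal.ofReal (2 * ε) ∂P.map Y := lintegral_mono fun y => by
        calc P.map U (Set.Icc (y - ε) (y + ε)) ≤ volume (Set.Icc (y - ε) (y + ε)) := hU _
          _ = ENNReal.ofReal (2 * ε) := by rw [Real.volume_Icc]; ring_nf
    _ = ENNReal.ofReal (2 * ε) := by simp

lemma measure_one_sub_le_le_of_map_eq (hUm : Measurable U)
    (hU : P.map U = volume.restrict (Set.Icc (0 : ℝ) 1)) (t : ℝ) :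
    P {ω | 1 - t ≤ U ω} ≤ ENNReal.ofReal t := by
  calc P {ω | 1 - t ≤ U ω} = volume (Set.Ici (1 - t) ∩ Set.Icc 0 1) := by
        rw [← Measure.restrict_apply measurableSet_Ici, ← hU,
          Measure.map_apply hUm measurableSet_Ici]
        rfl
    _ ≤ volume (Set.Icc (1 - t) 1) := measure_mono fun u hu => ⟨hu.1, hu.2.2⟩
    _ = ENNReal.ofReal t := by rw [Real.volume_Icc]; ring_nf

lemma measure_exists_abs_sub_partialSum_le_le {x : Ω → ℕ → ℝ} [IsProbabilityMeasure P]
    (hUm : Measurable U) (hxm : Measurable x) (hU : P.map U ≤ volume) (hind : IndepFun U x P)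
    (K : ℕ) (ε : ℝ) :
    P (⋃ j ∈ Icc 1 K, {ω | |U ω - partialSum (x ω) j| ≤ ε}) ≤ ENNReal.ofReal (K * (2 * ε)) := by
  calc P (⋃ j ∈ Icc 1 K, {ω | |U ω - partialSum (x ω) j| ≤ ε})
      ≤ ∑ j ∈ Icc 1 K, P {ω | |U ω - partialSum (x ω) j| ≤ ε} := measure_biUnion_finset_le _ _
    _ ≤ ∑ _j ∈ Icc 1 K, ENNReal.ofReal (2 * ε) := sum_le_sum fun j _ =>
        measure_abs_sub_le_le_of_indepFun hUm ((measurable_partialSum j).comp hxm) hU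
          (hind.comp measurable_id (measurable_partialSum j)) ε
    _ = ENNReal.ofReal (K * (2 * ε)) := by
        rw [sum_const, Nat.card_Icc, add_tsub_cancel_right, nsmul_eq_mul,
          ENNReal.ofReal_mul (Nat.cast_nonneg K), ENNReal.ofReal_natCast]

end Probability

theorem stmt16_general {Ω : Type*} [MeasurableSpace Ω]
    (P : Measure Ω) [IsProbabilityMeasure P]
    (K : ℕ) (hK : 1 ≤ K) (η : ℝ) (hη : 0 < η)
    (x x' : Ω → ℕ → ℝ) (U : Ω → ℝ) (c c' : Ω → ℕ)
    (hxm : Measurable x) (hUm : Measurable U)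
    (hx01 : ∀ᵐ ω ∂P, ∀ k : ℕ, 1 ≤ k → x ω k ∈ Set.Icc (0 : ℝ) 1)
    (hx'01 : ∀ᵐ ω ∂P, ∀ k : ℕ, 1 ≤ k → x' ω k ∈ Set.Icc (0 : ℝ) 1)
    (hxs : ∀ᵐ ω ∂P, HasSum (fun k => x ω (k + 1)) 1)
    (hU : Measure.map U P = volume.restrict (Set.Icc (0 : ℝ) 1))
    (hindep : ProbabilityTheory.IndepFun U (fun ω => (x ω, x' ω)) P)
    (hc : ∀ᵐ ω ∂P, 1 ≤ c ω ∧
      (∑ k ∈ Finset.Icc 1 (c ω), x ω k) ≤ U ω ∧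
      U ω < ∑ k ∈ Finset.Icc 1 (c ω + 1), x ω k)
    (hc' : ∀ᵐ ω ∂P, 1 ≤ c' ω ∧
      (∑ k ∈ Finset.Icc 1 (c' ω), x' ω k) ≤ U ω ∧
      U ω < ∑ k ∈ Finset.Icc 1 (c' ω + 1), x' ω k)
    (hclose : P {ω | ∃ k : ℕ, 1 ≤ k ∧ k ≤ K ∧ η / (K : ℝ) ^ 2 ≤ |x ω k - x' ω k|}
      ≤ ENNReal.ofReal (η / K))
    (htail : ∀ᵐ ω ∂P, (∑' k : ℕ, x ω (K + 1 + k)) ≤ η) :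
    ENNReal.ofReal (1 - 6 * η) ≤ P {ω | c ω = c' ω} := by
  have hK1 : (1 : ℝ) ≤ K := by exact_mod_cast hK
  set δ := η / (K : ℝ) ^ 2 with hδ
  have hKδ : (K : ℝ) * δ = η / K := by rw [hδ]; field_simp
  set A : Set Ω := {ω | ∃ k : ℕ, 1 ≤ k ∧ k ≤ K ∧ δ ≤ |x ω k - x' ω k|}
  set B : Set Ω := {ω | 1 - (η + K * δ) ≤ U ω}
  set C : Set Ω := ⋃ j ∈ Icc 1 K, {ω | |U ω - partialSum (x ω) j| ≤ K * δ}
  have hsub : ({ω | c ω = c' ω}ᶜ : Set Ω) ≤ᵐ[P] (A ∪ B ∪ C : Set Ω) := by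
    filter_upwards [hx01, hx'01, hxs, hc, hc', htail] with ω h01 h01' hs hcω hc'ω htω hne
    rcases paintbox_disagreement_cases (fun k hk => (h01 k hk).1) (fun k hk => (h01' k hk).1)
      hs (δ := δ) (by positivity) htω hcω.2 hc'ω.2 hne with hA | hB | hC
    · exact Or.inl (Or.inl hA)
    · exact Or.inl (Or.inr hB)
    · exact Or.inr (by simpa only [C, Set.mem_iUnion, exists_prop, Set.mem_ofPred_eq] using hC)
  have hPB : P B ≤ ENNReal.ofReal (η + K * δ) := measure_one_sub_le_le_of_map_eq hUm hU _
  have hPC : P C ≤ ENNReal.ofReal (K * (2 * (K * δ))) :=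
    measure_exists_abs_sub_partialSum_le_le hUm hxm (hU ▸ Measure.restrict_le_self)
      (hindep.comp measurable_id measurable_fst) K _
  have hbad : P {ω | c ω = c' ω}ᶜ ≤ ENNReal.ofReal (6 * η) :=
    calc P {ω | c ω = c' ω}ᶜ ≤ P A + P B + P C :=
          (measure_mono_ae hsub).trans <| (measure_union_le _ _).trans <| by
            gcongr; exact measure_union_le _ _
      _ ≤ ENNReal.ofReal (η / K) + ENNReal.ofReal (η + K * δ) +
            ENNReal.ofReal (K * (2 * (K * δ))) := by gcongr
      _ ≤ ENNReal.ofReal (6 * η) := by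
          rw [← ENNReal.ofReal_add (by positivity) (by positivity),
            ← ENNReal.ofReal_add (by positivity) (by positivity)]
          refine ENNReal.ofReal_le_ofReal ?_
          have hKη : (K : ℝ) * (2 * (η / K)) = 2 * η := by field_simp
          rw [hKδ, hKη]
          linarith [div_le_self hη.le hK1]
  rw [ENNReal.ofReal_sub _ (by positivity), ENNReal.ofReal_one]
  exact one_sub_le_measure_of_measure_compl_le hbad

theorem stmt16 {Ω : Type*} [MeasurableSpace Ω]
    (P : Measure Ω) [IsProbabilityMeasure P]
    (K : ℕ) (hK : 1 ≤ K) (η : ℝ) (hη : 0 < η)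
    (x x' : Ω → ℕ → ℝ) (U : Ω → ℝ) (c c' : Ω → ℕ)
    (hxm : Measurable x) (hx'm : Measurable x') (hUm : Measurable U)
    (hcm : Measurable c) (hc'm : Measurable c')
    (hx01 : ∀ᵐ ω ∂P, ∀ k : ℕ, 1 ≤ k → x ω k ∈ Set.Icc (0 : ℝ) 1)
    (hx'01 : ∀ᵐ ω ∂P, ∀ k : ℕ, 1 ≤ k → x' ω k ∈ Set.Icc (0 : ℝ) 1)
    (hxs : ∀ᵐ ω ∂P, HasSum (fun k => x ω (k + 1)) 1)
    (hx's : ∀ᵐ ω ∂P, HasSum (fun k => x' ω (k + 1)) 1)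
    (hU : Measure.map U P = volume.restrict (Set.Icc (0 : ℝ) 1))
    (hindep : ProbabilityTheory.IndepFun U (fun ω => (x ω, x' ω)) P)
    (hc : ∀ᵐ ω ∂P, 1 ≤ c ω ∧
      (∑ k ∈ Finset.Icc 1 (c ω), x ω k) ≤ U ω ∧
      U ω < ∑ k ∈ Finset.Icc 1 (c ω + 1), x ω k)
    (hc' : ∀ᵐ ω ∂P, 1 ≤ c' ω ∧
      (∑ k ∈ Finset.Icc 1 (c' ω), x' ω k) ≤ U ω ∧
      U ω < ∑ k ∈ Finset.Icc 1 (c' ω + 1), x' ω k)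
    (hclose : P {ω | ∃ k : ℕ, 1 ≤ k ∧ k ≤ K ∧ η / (K : ℝ) ^ 2 ≤ |x ω k - x' ω k|}
      ≤ ENNReal.ofReal (η / K))
    (htail : ∀ᵐ ω ∂P, (∑' k : ℕ, x ω (K + 1 + k)) ≤ η) :
    ENNReal.ofReal (1 - 6 * η) ≤ P {ω | c ω = c' ω} :=
  stmt16_general P K hK η hη x x' U c c' hxm hUm hx01 hx'01 hxs hU hindep hc hc' hclose htail
end
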